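/- arXiv:2512.14264 — 7 statements merged into one kernel-verified Lean document; each statement's English description precedes it below -/
import Mathlib

section
/- Sewing lemma: Let E be a Banach space, θ > 1 and c₁ > 0, and let μ = (μ_{ts})_{0 ≤ s ≤ t ≤ 1} be a family of elements of E such that ‖μ_{ts} − (μ_{tu} + μ_{us})‖ ≤ c₁ (t − s)^θ for all 0 ≤ s ≤ u ≤ t ≤ 1. Then there exists a constant C (depending only on c₁ and θ) and a unique function φ : [0,1] → E with φ₀ = 0 such that ‖φ_t − φ_s − μ_{ts}‖ ≤ C (t − s)^θ for all 0 ≤ s ≤ t ≤ 1; uniqueness means that any two functions vanishing at 0 and satisfying such a bound (with possibly different constants) coincide. -/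
/-!
Sum `μ` along the level-`n` dyadic grid of `[0, 1]` clamped to `[s, t]`. Refining the grid
changes these sums by at most `c₁ 2^{n(1-θ)}`, so they converge; and the sums for `[0, t]` split
into those for `[0, s]` and `[s, t]` up to an error of the same size, so the limits are the
increments `φ t - φ s` of a single function. Young's point-removal argument (in a partition of
`[s, t]` into `N + 1` intervals some interior point has neighbours at most `2 (t - s) / N` apart,
and deleting it costs at most `c₁ (2 (t - s) / N)^θ`) bounds every Riemann sum of `μ` against
`μ t s` by `c₁ 2^θ ζ(θ) (t - s)^θ`, and this bound passes to the limit. Uniqueness: the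
difference of two solutions has increments `O((t - s)^θ)` with `θ > 1`, hence is constant.
-/

open Finset Filter Topology

namespace Sewing

variable {E : Type*} [NormedAddCommGroup E] {θ : ℝ}

lemma two_rpow_one_sub_lt_one (hθ : 1 < θ) : (2 : ℝ) ^ (1 - θ) < 1 :=
  Real.rpow_lt_one_of_one_lt_of_neg one_lt_two (by linarith)

lemma tendsto_mul_two_rpow_one_sub_pow (hθ : 1 < θ) (c : ℝ) :
    Tendsto (fun n : ℕ => c * ((2 : ℝ) ^ (1 - θ)) ^ n) atTop (𝓝 0) := by
  simpa using (tendsto_pow_atTop_nhds_zero_of_lt_one (by positivity)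
    (two_rpow_one_sub_lt_one hθ)).const_mul c

lemma norm_sum_range_two_pow_le {f : ℕ → E} {c : ℝ} (n : ℕ)
    (hf : ∀ k < 2 ^ n, ‖f k‖ ≤ c * ((2 ^ n : ℝ)⁻¹) ^ θ) :
    ‖∑ k ∈ range (2 ^ n), f k‖ ≤ c * ((2 : ℝ) ^ (1 - θ)) ^ n := by
  refine (norm_sum_le _ _).trans ((sum_le_sum fun k hk => hf k (mem_range.1 hk)).trans_eq ?_)
  rw [sum_const, card_range, nsmul_eq_mul, mul_left_comm, Nat.cast_pow, Nat.cast_ofNat,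
    Real.rpow_sub two_pos, Real.rpow_one, div_pow, Real.inv_rpow (by positivity),
    ← Real.rpow_pow_comm (by norm_num), div_eq_mul_inv]

lemma summable_add_one_rpow_neg (hθ : 1 < θ) : Summable fun m : ℕ => ((m : ℝ) + 1) ^ (-θ) := by
  simpa using (summable_nat_add_iff 1).2 (Real.summable_nat_rpow.2 (neg_lt_neg hθ))

lemma sum_range_sub_two (y : ℕ → ℝ) (N : ℕ) :
    ∑ i ∈ range N, (y (i + 2) - y i) = (y (N + 1) - y 1) + (y N - y 0) := by
  rw [← sum_range_sub (fun k => y (k + 1)), ← sum_range_sub y, ← sum_add_distrib]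
  exact sum_congr rfl fun i _ => by ring

def AlmostAdditive (μ : ℝ → ℝ → E) (c₁ θ : ℝ) : Prop :=
  ∀ s u t : ℝ, 0 ≤ s → s ≤ u → u ≤ t → t ≤ 1 → ‖μ t s - (μ t u + μ u s)‖ ≤ c₁ * (t - s) ^ θ

def riemannSum (μ : ℝ → ℝ → E) (y : ℕ → ℝ) (N : ℕ) : E :=
  ∑ k ∈ range N, μ (y (k + 1)) (y k)

-- `fun k => y (if k ≤ i then k else k + 1)` is `y` with the point `y (i + 1)` deleted.
lemma riemannSum_eq_delete_add (μ : ℝ → ℝ → E) (y : ℕ → ℝ) (i M : ℕ) :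
    riemannSum μ y (i + 2 + M) =
      riemannSum μ (fun k => y (if k ≤ i then k else k + 1)) (i + 1 + M) +
        (μ (y (i + 2)) (y (i + 1)) + μ (y (i + 1)) (y i) - μ (y (i + 2)) (y i)) := by
  simp only [riemannSum, sum_range_add, sum_range_succ]
  have hlow : ∑ k ∈ range i, μ (y (if k + 1 ≤ i then k + 1 else k + 1 + 1))
      (y (if k ≤ i then k else k + 1)) = ∑ k ∈ range i, μ (y (k + 1)) (y k) :=
    sum_congr rfl fun k hk => by
      have := mem_range.1 hk
      rw [if_pos (by omega), if_pos (by omega)]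
  have hhigh : ∑ k ∈ range M,
      μ (y (if i + 1 + k + 1 ≤ i then i + 1 + k + 1 else i + 1 + k + 1 + 1))
        (y (if i + 1 + k ≤ i then i + 1 + k else i + 1 + k + 1)) =
        ∑ k ∈ range M, μ (y (i + 2 + k + 1)) (y (i + 2 + k)) :=
    sum_congr rfl fun k _ => by
      rw [if_neg (by omega), if_neg (by omega)]
      ring_nf
  rw [hlow, hhigh, if_neg (by omega), if_pos le_rfl]
  abel

lemma riemannSum_two_mul_sub (μ : ℝ → ℝ → E) (y : ℕ → ℝ) (N : ℕ) :
    riemannSum μ y (2 * N) - riemannSum μ (fun k => y (2 * k)) N =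
      ∑ k ∈ range N, (μ (y (2 * k + 2)) (y (2 * k + 1)) + μ (y (2 * k + 1)) (y (2 * k)) -
        μ (y (2 * k + 2)) (y (2 * k))) := by
  induction N with
  | zero => simp [riemannSum]
  | succ N ih =>
    rw [riemannSum, show 2 * (N + 1) = 2 * N + 1 + 1 by ring, sum_range_succ, sum_range_succ,
      riemannSum, sum_range_succ, sum_range_succ, ← ih, riemannSum, riemannSum]
    ring_nf
    abel

variable {μ : ℝ → ℝ → E} {c₁ : ℝ}

lemma AlmostAdditive.apply_self (hμ : AlmostAdditive μ c₁ θ) (hθ : 0 < θ) {x : ℝ}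
    (h0 : 0 ≤ x) (h1 : x ≤ 1) : μ x x = 0 := by
  have h := hμ x x x h0 le_rfl le_rfl h1
  rwa [sub_self, Real.zero_rpow hθ.ne', mul_zero, norm_le_zero_iff, sub_add_cancel_left,
    neg_eq_zero] at h

lemma AlmostAdditive.norm_sub_min_sub_max_le (hμ : AlmostAdditive μ c₁ θ) (hc₁ : 0 ≤ c₁)
    (hθ : 0 < θ) {s a b : ℝ} (hs0 : 0 ≤ s) (hs1 : s ≤ 1) (ha : 0 ≤ a) (hab : a ≤ b)
    (hb : b ≤ 1) :
    ‖μ b a - μ (min s b) (min s a) - μ (max s b) (max s a)‖ ≤ c₁ * (b - a) ^ θ := by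
  have hμs : μ s s = 0 := hμ.apply_self hθ hs0 hs1
  have hpos : 0 ≤ c₁ * (b - a) ^ θ := mul_nonneg hc₁ (Real.rpow_nonneg (sub_nonneg.2 hab) _)
  rcases le_total s a with hsa | has
  · rw [min_eq_left hsa, min_eq_left (hsa.trans hab), max_eq_right hsa,
      max_eq_right (hsa.trans hab), hμs]
    simpa using hpos
  rcases le_total b s with hbs | hsb
  · rw [min_eq_right hbs, min_eq_right (hab.trans hbs), max_eq_left hbs,
      max_eq_left (hab.trans hbs), hμs]
    simpa using hpos
  · rw [min_eq_left hsb, min_eq_right has, max_eq_right hsb, max_eq_left has,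
      sub_sub, add_comm (μ s a)]
    exact hμ a s b ha has hsb hb

lemma AlmostAdditive.norm_riemannSum_sub_le_sum (hμ : AlmostAdditive μ c₁ θ) (hc₁ : 0 ≤ c₁)
    (hθ : 0 < θ) (N : ℕ) {y : ℕ → ℝ} (hy : Monotone y) (h0 : 0 ≤ y 0) (h1 : y (N + 1) ≤ 1) :
    ‖riemannSum μ y (N + 1) - μ (y (N + 1)) (y 0)‖ ≤
      c₁ * 2 ^ θ * (∑ m ∈ range N, ((m : ℝ) + 1) ^ (-θ)) * (y (N + 1) - y 0) ^ θ := by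
  induction N generalizing y with
  | zero => simp [riemannSum]
  | succ N ih =>
    obtain ⟨i, hi, hgap⟩ : ∃ i ∈ range (N + 1),
        y (i + 2) - y i ≤ 2 * (y (N + 2) - y 0) / (N + 1) := by
      refine exists_le_of_sum_le ⟨0, by simp⟩ ?_
      rw [sum_range_sub_two, sum_const, card_range, nsmul_eq_mul, Nat.cast_add, Nat.cast_one,
        mul_div_cancel₀ _ (by positivity)]
      linarith [hy (Nat.zero_le 1), hy (Nat.le_succ (N + 1))]
    obtain ⟨M, rfl⟩ : ∃ M, N = i + M := ⟨N - i, by have := mem_range.1 hi; omega⟩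
    rw [show i + M + 1 + 1 = i + 2 + M by omega] at h1 ⊢
    rw [show i + M + 2 = i + 2 + M by omega] at hgap
    set y' : ℕ → ℝ := fun k => y (if k ≤ i then k else k + 1)
    have hy' : Monotone y' := hy.comp fun a b hab => by split_ifs <;> omega
    have hy'0 : y' 0 = y 0 := by simp [y']
    have hy'N : y' (i + M + 1) = y (i + 2 + M) := by
      simp only [y', if_neg (show ¬ i + M + 1 ≤ i by omega)]; ring_nf
    have hrest := ih hy' (hy'0 ▸ h0) (hy'N ▸ h1)
    rw [hy'0, hy'N, show i + M + 1 = i + 1 + M by omega] at hrest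
    have hdefect := hμ (y i) (y (i + 1)) (y (i + 2)) (h0.trans (hy (Nat.zero_le _)))
      (hy (Nat.le_succ _)) (hy (Nat.le_succ _)) ((hy (by omega)).trans h1)
    have hcost : c₁ * (y (i + 2) - y i) ^ θ ≤
        c₁ * 2 ^ θ * (((i + M : ℕ) : ℝ) + 1) ^ (-θ) * (y (i + 2 + M) - y 0) ^ θ := by
      have hL : 0 ≤ y (i + 2 + M) - y 0 := sub_nonneg.2 (hy (Nat.zero_le _))
      calc c₁ * (y (i + 2) - y i) ^ θ
          ≤ c₁ * (2 * (y (i + 2 + M) - y 0) / (((i + M : ℕ) : ℝ) + 1)) ^ θ := by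
            have := sub_nonneg.2 (hy (show i ≤ i + 2 by omega))
            gcongr
        _ = _ := by
            rw [Real.div_rpow (by positivity) (by positivity), Real.mul_rpow (by norm_num) hL,
              Real.rpow_neg (by positivity)]
            ring
    rw [riemannSum_eq_delete_add]
    calc _ = ‖(riemannSum μ y' (i + 1 + M) - μ (y (i + 2 + M)) (y 0)) -
          (μ (y (i + 2)) (y i) - (μ (y (i + 2)) (y (i + 1)) + μ (y (i + 1)) (y i)))‖ := by
          congr 1; abel
      _ ≤ _ := (norm_sub_le _ _).trans (add_le_add hrest (hdefect.trans hcost))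
      _ = _ := by rw [sum_range_succ]; ring

lemma AlmostAdditive.norm_riemannSum_sub_le (hμ : AlmostAdditive μ c₁ θ) (hc₁ : 0 ≤ c₁)
    (hθ : 1 < θ) (N : ℕ) {y : ℕ → ℝ} (hy : Monotone y) (h0 : 0 ≤ y 0) (h1 : y N ≤ 1) :
    ‖riemannSum μ y N - μ (y N) (y 0)‖ ≤
      c₁ * 2 ^ θ * (∑' m : ℕ, ((m : ℝ) + 1) ^ (-θ)) * (y N - y 0) ^ θ := by
  have hZ := summable_add_one_rpow_neg hθ
  cases N with
  | zero =>
    rw [riemannSum, sum_range_zero, hμ.apply_self (by linarith) h0 h1, sub_zero, norm_zero,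
      sub_self, Real.zero_rpow (by linarith), mul_zero]
  | succ N =>
    refine (hμ.norm_riemannSum_sub_le_sum hc₁ (by linarith) N hy h0 h1).trans ?_
    have := sub_nonneg.2 (hy (Nat.zero_le (N + 1)))
    gcongr
    exact hZ.sum_le_tsum _ fun m _ => by positivity

/- Clamping the grid `k / 2 ^ n` to `[s, t]` yields the dyadic partition of `[s, t]`, padded with
repeated endpoints that contribute the vanishing terms `μ s s` and `μ t t`. -/
noncomputable def clampedDyadic (s t : ℝ) (n k : ℕ) : ℝ := max s (min t (k / 2 ^ n))

noncomputable def dyadicSum (μ : ℝ → ℝ → E) (s t : ℝ) (n : ℕ) : E :=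
  riemannSum μ (clampedDyadic s t n) (2 ^ n)

section clampedDyadic

variable {s t : ℝ} {n : ℕ}

lemma clampedDyadic_monotone (s t : ℝ) (n : ℕ) : Monotone (clampedDyadic s t n) :=
  fun a b hab => max_le_max le_rfl (min_le_min le_rfl (by gcongr))

lemma le_clampedDyadic (k : ℕ) : s ≤ clampedDyadic s t n k := le_max_left _ _

lemma clampedDyadic_le (hst : s ≤ t) (k : ℕ) : clampedDyadic s t n k ≤ t :=
  max_le hst (min_le_left _ _)

lemma clampedDyadic_zero (hs : 0 ≤ s) : clampedDyadic s t n 0 = s := by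
  simp [clampedDyadic, hs]

lemma clampedDyadic_two_pow (hst : s ≤ t) (ht : t ≤ 1) : clampedDyadic s t n (2 ^ n) = t := by
  simp [clampedDyadic, ht, hst]

lemma clampedDyadic_two_mul (k : ℕ) :
    clampedDyadic s t (n + 1) (2 * k) = clampedDyadic s t n k := by
  rw [clampedDyadic, clampedDyadic, Nat.cast_mul, Nat.cast_two, pow_succ, mul_comm (2 : ℝ),
    mul_div_mul_right _ _ two_ne_zero]

lemma clampedDyadic_succ_sub_le (k : ℕ) :
    clampedDyadic s t n (k + 1) - clampedDyadic s t n k ≤ (2 ^ n : ℝ)⁻¹ := by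
  have : ((k + 1 : ℕ) : ℝ) / 2 ^ n = k / 2 ^ n + (2 ^ n : ℝ)⁻¹ := by push_cast; ring
  simp only [clampedDyadic, this, max_def, min_def]
  have : (0 : ℝ) ≤ (2 ^ n : ℝ)⁻¹ := by positivity
  split_ifs <;> linarith

lemma min_clampedDyadic (hs : 0 ≤ s) (hst : s ≤ t) (k : ℕ) :
    min s (clampedDyadic 0 t n k) = clampedDyadic 0 s n k := by
  have hk : (0 : ℝ) ≤ k / 2 ^ n := by positivity
  rw [clampedDyadic, clampedDyadic, max_eq_right (le_min (hs.trans hst) hk),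
    max_eq_right (le_min hs hk), ← min_assoc, min_eq_left hst]

lemma max_clampedDyadic (hs : 0 ≤ s) (k : ℕ) :
    max s (clampedDyadic 0 t n k) = clampedDyadic s t n k := by
  rw [clampedDyadic, clampedDyadic, ← max_assoc, max_eq_left hs]

end clampedDyadic

section dyadicSum

variable {s t : ℝ}

lemma AlmostAdditive.norm_dyadicSum_succ_sub_le (hμ : AlmostAdditive μ c₁ θ) (hc₁ : 0 ≤ c₁)
    (hθ : 0 < θ) (hs : 0 ≤ s) (hst : s ≤ t) (ht : t ≤ 1) (n : ℕ) :
    ‖dyadicSum μ s t (n + 1) - dyadicSum μ s t n‖ ≤ c₁ * ((2 : ℝ) ^ (1 - θ)) ^ n := by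
  have hcoarse : dyadicSum μ s t n =
      riemannSum μ (fun k => clampedDyadic s t (n + 1) (2 * k)) (2 ^ n) := by
    simp only [dyadicSum, clampedDyadic_two_mul]
  rw [hcoarse, dyadicSum, pow_succ', riemannSum_two_mul_sub]
  refine norm_sum_range_two_pow_le n fun k _ => ?_
  have hright : clampedDyadic s t (n + 1) (2 * k + 2) = clampedDyadic s t n (k + 1) :=
    clampedDyadic_two_mul (k + 1)
  rw [← norm_neg, neg_sub, hright, clampedDyadic_two_mul]
  refine (hμ _ _ _ (hs.trans (le_clampedDyadic _)) ?_ ?_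
    ((clampedDyadic_le hst _).trans ht)).trans ?_
  · rw [← clampedDyadic_two_mul]; exact clampedDyadic_monotone _ _ _ (by omega)
  · rw [← hright]; exact clampedDyadic_monotone _ _ _ (by omega)
  · have := sub_nonneg.2 (clampedDyadic_monotone s t n (Nat.le_succ k))
    gcongr
    exact clampedDyadic_succ_sub_le k

lemma AlmostAdditive.cauchySeq_dyadicSum (hμ : AlmostAdditive μ c₁ θ) (hc₁ : 0 ≤ c₁)
    (hθ : 1 < θ) (hs : 0 ≤ s) (hst : s ≤ t) (ht : t ≤ 1) : CauchySeq (dyadicSum μ s t) :=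
  cauchySeq_of_le_geometric _ c₁ (two_rpow_one_sub_lt_one hθ) fun n => by
    rw [dist_comm, dist_eq_norm]
    exact hμ.norm_dyadicSum_succ_sub_le hc₁ (by linarith) hs hst ht n

lemma AlmostAdditive.norm_dyadicSum_sub_sub_le (hμ : AlmostAdditive μ c₁ θ) (hc₁ : 0 ≤ c₁)
    (hθ : 0 < θ) (hs : 0 ≤ s) (hst : s ≤ t) (ht : t ≤ 1) (n : ℕ) :
    ‖dyadicSum μ 0 t n - dyadicSum μ 0 s n - dyadicSum μ s t n‖ ≤
      c₁ * ((2 : ℝ) ^ (1 - θ)) ^ n := by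
  simp only [dyadicSum, riemannSum, ← min_clampedDyadic hs hst, ← max_clampedDyadic hs,
    ← sum_sub_distrib]
  refine norm_sum_range_two_pow_le n fun k _ => ?_
  have hk := clampedDyadic_monotone 0 t n (Nat.le_succ k)
  refine (hμ.norm_sub_min_sub_max_le hc₁ hθ hs (hst.trans ht) (le_clampedDyadic k) hk
    ((clampedDyadic_le (hs.trans hst) _).trans ht)).trans ?_
  have := sub_nonneg.2 hk
  gcongr
  exact clampedDyadic_succ_sub_le k

lemma AlmostAdditive.norm_dyadicSum_sub_le (hμ : AlmostAdditive μ c₁ θ) (hc₁ : 0 ≤ c₁)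
    (hθ : 1 < θ) (hs : 0 ≤ s) (hst : s ≤ t) (ht : t ≤ 1) (n : ℕ) :
    ‖dyadicSum μ s t n - μ t s‖ ≤
      c₁ * 2 ^ θ * (∑' m : ℕ, ((m : ℝ) + 1) ^ (-θ)) * (t - s) ^ θ := by
  have h := hμ.norm_riemannSum_sub_le hc₁ hθ (2 ^ n) (clampedDyadic_monotone s t n)
    (by rwa [clampedDyadic_zero hs]) (by rwa [clampedDyadic_two_pow hst ht])
  rwa [clampedDyadic_zero hs, clampedDyadic_two_pow hst ht] at h

lemma AlmostAdditive.dyadicSum_self (hμ : AlmostAdditive μ c₁ θ) (hθ : 0 < θ) (hs : 0 ≤ s)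
    (hs1 : s ≤ 1) (n : ℕ) : dyadicSum μ s s n = 0 := by
  have hconst (k : ℕ) : clampedDyadic s s n k = s := max_eq_left (min_le_left _ _)
  simp [dyadicSum, riemannSum, hconst, hμ.apply_self hθ hs hs1]

end dyadicSum

noncomputable def sewing (μ : ℝ → ℝ → E) (t : ℝ) : E := limUnder atTop (dyadicSum μ 0 t)

lemma AlmostAdditive.sewing_zero (hμ : AlmostAdditive μ c₁ θ) (hθ : 0 < θ) :
    sewing μ 0 = 0 := by
  rw [sewing, funext (hμ.dyadicSum_self hθ le_rfl zero_le_one)]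
  exact tendsto_const_nhds.limUnder_eq

section sewing

variable [CompleteSpace E] {s t : ℝ}

lemma AlmostAdditive.tendsto_dyadicSum_sewing (hμ : AlmostAdditive μ c₁ θ) (hc₁ : 0 ≤ c₁)
    (hθ : 1 < θ) (hs : 0 ≤ s) (hst : s ≤ t) (ht : t ≤ 1) :
    Tendsto (dyadicSum μ s t) atTop (𝓝 (sewing μ t - sewing μ s)) := by
  have hlim {u : ℝ} (hu : 0 ≤ u) (hu1 : u ≤ 1) :
      Tendsto (dyadicSum μ 0 u) atTop (𝓝 (sewing μ u)) :=
    (hμ.cauchySeq_dyadicSum hc₁ hθ le_rfl hu hu1).tendsto_limUnder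
  have hdefect : Tendsto (fun n => dyadicSum μ 0 t n - dyadicSum μ 0 s n - dyadicSum μ s t n)
      atTop (𝓝 0) :=
    squeeze_zero_norm (hμ.norm_dyadicSum_sub_sub_le hc₁ (by linarith) hs hst ht)
      (tendsto_mul_two_rpow_one_sub_pow hθ c₁)
  simpa using ((hlim (hs.trans hst) ht).sub (hlim hs (hst.trans ht))).sub hdefect

lemma AlmostAdditive.norm_sewing_sub_sub_le (hμ : AlmostAdditive μ c₁ θ) (hc₁ : 0 ≤ c₁)
    (hθ : 1 < θ) (hs : 0 ≤ s) (hst : s ≤ t) (ht : t ≤ 1) :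
    ‖sewing μ t - sewing μ s - μ t s‖ ≤
      c₁ * 2 ^ θ * (∑' m : ℕ, ((m : ℝ) + 1) ^ (-θ)) * (t - s) ^ θ :=
  le_of_tendsto' ((hμ.tendsto_dyadicSum_sewing hc₁ hθ hs hst ht).sub_const (μ t s)).norm
    (hμ.norm_dyadicSum_sub_le hc₁ hθ hs hst ht)

end sewing

lemma eq_of_norm_sub_le_rpow {g : ℝ → E} {C : ℝ} (hθ : 1 < θ)
    (hg : ∀ s t : ℝ, 0 ≤ s → s ≤ t → t ≤ 1 → ‖g t - g s‖ ≤ C * (t - s) ^ θ)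
    {t : ℝ} (ht : 0 ≤ t) (ht1 : t ≤ 1) : g t = g 0 := by
  have hbound (n : ℕ) : ‖g t - g 0‖ ≤ C * t ^ θ * ((2 : ℝ) ^ (1 - θ)) ^ n := by
    have htel : g t - g 0 = ∑ k ∈ range (2 ^ n),
        (g ((k + 1 : ℕ) * (t / 2 ^ n)) - g (k * (t / 2 ^ n))) := by
      rw [sum_range_sub (fun k : ℕ => g (k * (t / 2 ^ n)))]
      push_cast
      rw [mul_div_cancel₀ _ (by positivity), zero_mul]
    rw [htel]
    refine norm_sum_range_two_pow_le n fun k hk => ?_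
    have hle : ((k + 1 : ℕ) : ℝ) * (t / 2 ^ n) ≤ t := by
      rw [mul_div_assoc', div_le_iff₀ (by positivity), mul_comm]
      gcongr
      exact_mod_cast hk
    refine (hg _ _ (by positivity) (by gcongr; simp) (hle.trans ht1)).trans_eq ?_
    rw [← sub_mul, Nat.cast_succ, add_sub_cancel_left, one_mul, div_eq_mul_inv,
      Real.mul_rpow ht (by positivity), mul_assoc]
  exact sub_eq_zero.1 <| norm_le_zero_iff.1 <|
    ge_of_tendsto' (tendsto_mul_two_rpow_one_sub_pow hθ (C * t ^ θ)) hbound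

end Sewing

theorem sewing_lemma_general
    {E : Type*} [NormedAddCommGroup E] [CompleteSpace E]
    (θ c₁ : ℝ) (hθ : 1 < θ) (hc₁ : 0 < c₁)
    (μ : ℝ → ℝ → E)
    (hμ : ∀ s u t : ℝ, 0 ≤ s → s ≤ u → u ≤ t → t ≤ 1 →
      ‖μ t s - (μ t u + μ u s)‖ ≤ c₁ * (t - s) ^ θ) :
    ∃ C : ℝ, ∃ φ : ℝ → E, φ 0 = 0 ∧
      (∀ s t : ℝ, 0 ≤ s → s ≤ t → t ≤ 1 → ‖φ t - φ s - μ t s‖ ≤ C * (t - s) ^ θ) ∧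
      ∀ ψ₁ ψ₂ : ℝ → E, ψ₁ 0 = 0 → ψ₂ 0 = 0 →
        (∃ C₁ : ℝ, ∀ s t : ℝ, 0 ≤ s → s ≤ t → t ≤ 1 →
          ‖ψ₁ t - ψ₁ s - μ t s‖ ≤ C₁ * (t - s) ^ θ) →
        (∃ C₂ : ℝ, ∀ s t : ℝ, 0 ≤ s → s ≤ t → t ≤ 1 →
          ‖ψ₂ t - ψ₂ s - μ t s‖ ≤ C₂ * (t - s) ^ θ) →
        ∀ t : ℝ, 0 ≤ t → t ≤ 1 → ψ₁ t = ψ₂ t := by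
  replace hμ : Sewing.AlmostAdditive μ c₁ θ := hμ
  refine ⟨_, Sewing.sewing μ, hμ.sewing_zero (by linarith),
    fun s t hs hst ht => hμ.norm_sewing_sub_sub_le hc₁.le hθ hs hst ht, ?_⟩
  rintro ψ₁ ψ₂ h₁ h₂ ⟨C₁, hC₁⟩ ⟨C₂, hC₂⟩ x hx hx1
  have hdiff (s t : ℝ) (hs : 0 ≤ s) (hst : s ≤ t) (ht : t ≤ 1) :
      ‖(ψ₁ - ψ₂) t - (ψ₁ - ψ₂) s‖ ≤ (C₁ + C₂) * (t - s) ^ θ :=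
    calc ‖(ψ₁ - ψ₂) t - (ψ₁ - ψ₂) s‖
        = ‖(ψ₁ t - ψ₁ s - μ t s) - (ψ₂ t - ψ₂ s - μ t s)‖ := by congr 1; simp; abel
      _ ≤ C₁ * (t - s) ^ θ + C₂ * (t - s) ^ θ :=
        (norm_sub_le _ _).trans (add_le_add (hC₁ s t hs hst ht) (hC₂ s t hs hst ht))
      _ = (C₁ + C₂) * (t - s) ^ θ := by ring
  simpa [h₁, h₂, sub_eq_zero] using Sewing.eq_of_norm_sub_le_rpow hθ hdiff hx hx1

/-- **Sewing lemma.** Given an almost additive family `μ` on `[0,1]` with values in a Banach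
space, with constant `c₁` and exponent `θ > 1`, there is a constant `C` and a unique function
`φ` vanishing at `0` whose increments are approximated by `μ` up to `C (t-s)^θ`. -/
theorem sewing_lemma
    {E : Type*} [NormedAddCommGroup E] [NormedSpace ℝ E] [CompleteSpace E]
    (θ c₁ : ℝ) (hθ : 1 < θ) (hc₁ : 0 < c₁)
    (μ : ℝ → ℝ → E)
    (hμ : ∀ s u t : ℝ, 0 ≤ s → s ≤ u → u ≤ t → t ≤ 1 →
      ‖μ t s - (μ t u + μ u s)‖ ≤ c₁ * (t - s) ^ θ) :
    ∃ C : ℝ, ∃ φ : ℝ → E, φ 0 = 0 ∧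
      (∀ s t : ℝ, 0 ≤ s → s ≤ t → t ≤ 1 → ‖φ t - φ s - μ t s‖ ≤ C * (t - s) ^ θ) ∧
      ∀ ψ₁ ψ₂ : ℝ → E, ψ₁ 0 = 0 → ψ₂ 0 = 0 →
        (∃ C₁ : ℝ, ∀ s t : ℝ, 0 ≤ s → s ≤ t → t ≤ 1 →
          ‖ψ₁ t - ψ₁ s - μ t s‖ ≤ C₁ * (t - s) ^ θ) →
        (∃ C₂ : ℝ, ∀ s t : ℝ, 0 ≤ s → s ≤ t → t ≤ 1 →
          ‖ψ₂ t - ψ₂ s - μ t s‖ ≤ C₂ * (t - s) ^ θ) →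
        ∀ t : ℝ, 0 ≤ t → t ≤ 1 → ψ₁ t = ψ₂ t :=
  sewing_lemma_general θ c₁ hθ hc₁ μ hμ
end

section
/- Partition estimate in the proof of the sewing lemma: Let E be a Banach space, θ > 1 and c₁ > 0, and let μ = (μ_{ts})_{0 ≤ s ≤ t ≤ 1} be a family of elements of E such that ‖μ_{ts} − (μ_{tu} + μ_{us})‖ ≤ c₁ (t − s)^θ for all 0 ≤ s ≤ u ≤ t ≤ 1. Then for every 0 ≤ s ≤ t ≤ 1, every n ≥ 1 and every partition s = t₀ < t₁ < ⋯ < t_n = t, one has ‖μ_{ts} − Σ_{i=0}^{n−1} μ_{t_{i+1} t_i}‖ ≤ c₁ (Σ_{k=1}^{n−1} (2/k)^θ) (t − s)^θ. -/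
private lemma sum_skip_aux {E : Type*} [AddCommGroup E] (F : ℕ → ℕ → E) :
    ∀ n k : ℕ, k < n →
    ∑ j ∈ Finset.range n, F (if j ≤ k then j else j + 1) (if j + 1 ≤ k then j + 1 else j + 2)
      = ∑ j ∈ Finset.range (n + 1), F j (j + 1) - (F k (k + 1) + F (k + 1) (k + 2))
        + F k (k + 2) := by
  intro n
  induction n with
  | zero => omega
  | succ m ih =>
    intro k hk
    rcases Nat.lt_or_ge k m with h | h
    · rw [Finset.sum_range_succ, ih k h, Finset.sum_range_succ (n := m + 1)]
      rw [if_neg (by omega), if_neg (by omega)]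
      abel
    · have hkm : k = m := by omega
      subst hkm
      rw [Finset.sum_range_succ, Finset.sum_range_succ (n := k + 1),
        Finset.sum_range_succ (n := k)]
      rw [if_pos (le_refl k), if_neg (by omega)]
      have h0 : ∑ j ∈ Finset.range k,
          F (if j ≤ k then j else j + 1) (if j + 1 ≤ k then j + 1 else j + 2)
          = ∑ j ∈ Finset.range k, F j (j + 1) := by
        refine Finset.sum_congr rfl fun j hj => ?_
        simp only [Finset.mem_range] at hj
        rw [if_pos (by omega), if_pos (by omega)]
      rw [h0]
      abel

/-- **Partition estimate in the proof of the sewing lemma.** For an almost additive family `μ`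
with constant `c₁` and exponent `θ > 1`, and any partition `s = π 0 < π 1 < ⋯ < π n = t` of
`[s,t] ⊆ [0,1]`, the difference between `μ t s` and the Riemann-sum of `μ` along the partition
is bounded by `c₁ (∑_{k=1}^{n-1} (2/k)^θ) (t-s)^θ`. -/
theorem sewing_partition_estimate
    {E : Type*} [NormedAddCommGroup E] [NormedSpace ℝ E]
    (θ c₁ : ℝ) (hθ : 1 < θ) (hc₁ : 0 < c₁)
    (μ : ℝ → ℝ → E)
    (hμ : ∀ s u t : ℝ, 0 ≤ s → s ≤ u → u ≤ t → t ≤ 1 →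
      ‖μ t s - (μ t u + μ u s)‖ ≤ c₁ * (t - s) ^ θ)
    (s t : ℝ) (hs : 0 ≤ s) (hst : s ≤ t) (ht : t ≤ 1)
    (n : ℕ) (hn : 1 ≤ n) (π : ℕ → ℝ)
    (hπs : π 0 = s) (hπt : π n = t)
    (hπmono : ∀ i < n, π i < π (i + 1)) :
    ‖μ t s - ∑ i ∈ Finset.range n, μ (π (i + 1)) (π i)‖ ≤
      c₁ * (∑ k ∈ Finset.Icc 1 (n - 1), (2 / (k : ℝ)) ^ θ) * (t - s) ^ θ := by
  induction n, hn using Nat.le_induction generalizing π with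
  | base =>
    have h0 : Finset.Icc 1 (1 - 1) = (∅ : Finset ℕ) := rfl
    simp [hπs, hπt, h0]
  | succ n hn1 IH =>
    obtain ⟨m, rfl⟩ : ∃ m, n = m + 1 := ⟨n - 1, by omega⟩
    -- monotonicity of π on [0, m+2]
    have mono : ∀ a b : ℕ, a ≤ b → b ≤ m + 2 → π a ≤ π b := by
      intro a b hab hb
      induction b with
      | zero => simp_all
      | succ c ihc =>
        rcases Nat.lt_or_ge a (c + 1) with h | h
        · exact le_trans (ihc (by omega) (by omega)) (le_of_lt (hπmono c (by omega)))
        · have : a = c + 1 := by omega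
          simp [this]
    have hθ0 : (0:ℝ) ≤ θ := by linarith
    -- telescoping bound
    have key : ∑ i ∈ Finset.Icc 1 (m + 1), (π (i + 1) - π (i - 1)) ≤ 2 * (t - s) := by
      have hIcc : Finset.Icc 1 (m + 1) = Finset.Ico 1 (m + 2) := rfl
      rw [hIcc, Finset.sum_Ico_eq_sum_range]
      have hsimp : ∀ j ∈ Finset.range (m + 2 - 1),
          π (1 + j + 1) - π (1 + j - 1)
            = (π (j + 1 + 1) - π (j + 1)) + (π (j + 1) - π j) := by
        intro j _
        have e1 : 1 + j + 1 = j + 1 + 1 := by omega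
        have e2 : 1 + j - 1 = j := by omega
        rw [e1, e2]; ring
      rw [Finset.sum_congr rfl hsimp, Finset.sum_add_distrib]
      have t1 : ∑ j ∈ Finset.range (m + 2 - 1), (π (j + 1 + 1) - π (j + 1))
          = π (m + 2) - π 1 := by
        have := Finset.sum_range_sub (fun j => π (j + 1)) (m + 1)
        simpa using this
      have t2 : ∑ j ∈ Finset.range (m + 2 - 1), (π (j + 1) - π j)
          = π (m + 1) - π 0 := by
        have := Finset.sum_range_sub π (m + 1)
        simpa using this
      rw [t1, t2]
      have h1 : s ≤ π 1 := hπs ▸ mono 0 1 (by omega) (by omega)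
      have h2 : π (m + 1) ≤ t := hπt ▸ mono (m + 1) (m + 2) (by omega) (by omega)
      rw [hπt, hπs] at *
      linarith
    -- pigeonhole: find an index with small gap
    have hcard : (Finset.Icc 1 (m + 1)).card = m + 1 := by
      rw [Nat.card_Icc]; omega
    have hne : (Finset.Icc 1 (m + 1)).Nonempty := ⟨1, by simp⟩
    have hsum_le : ∑ i ∈ Finset.Icc 1 (m + 1), (π (i + 1) - π (i - 1))
        ≤ ∑ _i ∈ Finset.Icc 1 (m + 1), 2 * (t - s) / (m + 1) := by
      rw [Finset.sum_const, hcard, nsmul_eq_mul]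
      have hm1 : ((m : ℝ) + 1) ≠ 0 := by positivity
      push_cast
      rw [mul_div_cancel₀ _ hm1] at *
      exact key
    obtain ⟨i, hi, hile⟩ := Finset.exists_le_of_sum_le hne hsum_le
    simp only [Finset.mem_Icc] at hi
    obtain ⟨k, rfl⟩ : ∃ k, i = k + 1 := ⟨i - 1, by omega⟩
    have hk : k < m + 1 := by omega
    -- reduced partition
    set π' : ℕ → ℝ := fun j => if j ≤ k then π j else π (j + 1) with hπ'def
    have hπ'0 : π' 0 = s := by simp [hπ'def, hπs]
    have hπ'n : π' (m + 1) = t := by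
      simp only [hπ'def]
      rw [if_neg (by omega), hπt]
    have hπ'mono : ∀ j < m + 1, π' j < π' (j + 1) := by
      intro j hj
      simp only [hπ'def]
      rcases Nat.lt_or_ge (j + 1) (k + 1) with h | h
      · rw [if_pos (by omega), if_pos (by omega)]
        exact hπmono j (by omega)
      · rcases Nat.eq_or_lt_of_le h with h' | h'
        · rw [if_pos (by omega), if_neg (by omega)]
          have e : j = k := by omega
          subst e
          exact lt_trans (hπmono j (by omega)) (hπmono (j + 1) (by omega))
        · rw [if_neg (by omega), if_neg (by omega)]
          exact hπmono (j + 1) (by omega)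
    have hIH := IH π' hπ'0 hπ'n hπ'mono
    simp only [Nat.add_sub_cancel] at hIH
    -- relate the two Riemann sums
    set F : ℕ → ℕ → E := fun a b => μ (π b) (π a) with hF
    have hS' : ∑ j ∈ Finset.range (m + 1), μ (π' (j + 1)) (π' j)
        = ∑ j ∈ Finset.range (m + 2), μ (π (j + 1)) (π j)
          - (F k (k + 1) + F (k + 1) (k + 2)) + F k (k + 2) := by
      have := sum_skip_aux F (m + 1) k hk
      rw [← this]
      refine Finset.sum_congr rfl fun j hj => ?_
      simp only [hπ'def, hF, apply_ite π]
    -- the glue term estimate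
    have h0k : 0 ≤ π k := hs.trans (hπs ▸ mono 0 k (by omega) (by omega))
    have hk2 : π (k + 2) ≤ 1 := le_trans (hπt ▸ mono (k + 2) (m + 2) (by omega) (by omega)) ht
    have hglue : ‖μ (π (k + 2)) (π k) - (μ (π (k + 2)) (π (k + 1)) + μ (π (k + 1)) (π k))‖
        ≤ c₁ * (π (k + 2) - π k) ^ θ :=
      hμ (π k) (π (k + 1)) (π (k + 2)) h0k
        (mono k (k + 1) (by omega) (by omega)) (mono (k + 1) (k + 2) (by omega) (by omega)) hk2
    have hd : π (k + 2) - π k ≤ 2 / ((m : ℝ) + 1) * (t - s) := by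
      have e : k + 1 - 1 = k := by omega
      rw [e] at hile
      have he : 2 * (t - s) / ((m : ℝ) + 1) = 2 / ((m : ℝ) + 1) * (t - s) := by
        ring
      linarith [hile, he]
    have hpow : (π (k + 2) - π k) ^ θ ≤ (2 / ((m : ℝ) + 1)) ^ θ * (t - s) ^ θ := by
      rw [← Real.mul_rpow (by positivity) (by linarith)]
      exact Real.rpow_le_rpow
        (sub_nonneg.2 (mono k (k + 2) (by omega) (by omega))) hd hθ0
    -- combine
    have htri : ‖μ t s - ∑ j ∈ Finset.range (m + 2), μ (π (j + 1)) (π j)‖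
        ≤ ‖μ t s - ∑ j ∈ Finset.range (m + 1), μ (π' (j + 1)) (π' j)‖
          + ‖μ (π (k + 2)) (π k) - (μ (π (k + 2)) (π (k + 1)) + μ (π (k + 1)) (π k))‖ := by
      have e : μ t s - ∑ j ∈ Finset.range (m + 2), μ (π (j + 1)) (π j)
          = (μ t s - ∑ j ∈ Finset.range (m + 1), μ (π' (j + 1)) (π' j))
            + (μ (π (k + 2)) (π k)
              - (μ (π (k + 2)) (π (k + 1)) + μ (π (k + 1)) (π k))) := by
        rw [hS']
        simp only [hF]
        abel
      rw [e]
      exact norm_add_le _ _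
    have hsplit : ∑ j ∈ Finset.Icc 1 (m + 1 + 1 - 1), (2 / (j : ℝ)) ^ θ
        = ∑ j ∈ Finset.Icc 1 m, (2 / (j : ℝ)) ^ θ + (2 / ((m : ℝ) + 1)) ^ θ := by
      have : m + 1 + 1 - 1 = m + 1 := by omega
      rw [this, Finset.sum_Icc_succ_top (by omega)]
      push_cast
      ring
    rw [hsplit]
    have hbound2 : ‖μ (π (k + 2)) (π k) - (μ (π (k + 2)) (π (k + 1)) + μ (π (k + 1)) (π k))‖
        ≤ c₁ * (2 / ((m : ℝ) + 1)) ^ θ * (t - s) ^ θ := by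
      calc _ ≤ c₁ * (π (k + 2) - π k) ^ θ := hglue
        _ ≤ c₁ * ((2 / ((m : ℝ) + 1)) ^ θ * (t - s) ^ θ) := by
            exact mul_le_mul_of_nonneg_left hpow hc₁.le
        _ = c₁ * (2 / ((m : ℝ) + 1)) ^ θ * (t - s) ^ θ := by ring
    calc ‖μ t s - ∑ j ∈ Finset.range (m + 2), μ (π (j + 1)) (π j)‖
        ≤ ‖μ t s - ∑ j ∈ Finset.range (m + 1), μ (π' (j + 1)) (π' j)‖
          + ‖μ (π (k + 2)) (π k) - (μ (π (k + 2)) (π (k + 1)) + μ (π (k + 1)) (π k))‖ := htri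
      _ ≤ c₁ * (∑ j ∈ Finset.Icc 1 m, (2 / (j : ℝ)) ^ θ) * (t - s) ^ θ
          + c₁ * (2 / ((m : ℝ) + 1)) ^ θ * (t - s) ^ θ := add_le_add hIH hbound2
      _ = c₁ * (∑ j ∈ Finset.Icc 1 m, (2 / (j : ℝ)) ^ θ + (2 / ((m : ℝ) + 1)) ^ θ)
          * (t - s) ^ θ := by ring
end

section
/- Existence and uniqueness of the Young integral: Let 1 ≤ p < 2 and let a, b : [0,1] → ℝ be (1/p)-Hölder continuous functions, say |a_t − a_s| ≤ H (t−s)^{1/p} and |b_t − b_s| ≤ H (t−s)^{1/p} for all s ≤ t. Set μ_{ts} = a_s (b_t − b_s). Then μ satisfies ‖μ_{ts} − (μ_{tu} + μ_{us})‖ ≤ H² (t − s)^{2/p} for all 0 ≤ s ≤ u ≤ t ≤ 1, and consequently there exists a constant C and a unique function φ : [0,1] → ℝ with φ₀ = 0 such that |φ_t − φ_s − a_s (b_t − b_s)| ≤ C (t − s)^{2/p} for all 0 ≤ s ≤ t ≤ 1 (uniqueness among functions vanishing at 0 satisfying such a bound for some constant). The function φ_t is the Young integral ∫₀ᵗ a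 db. -/
/-!
The defect of the germ `μ s t = a s * (b t - b s)` is `-(a u - a s) * (b t - b u)`, hence bounded
by `K (t - s) ^ θ` with `K = H ^ 2` and `θ = 2 / p > 1`. In a partition of `[s, t]` into `N + 1`
intervals some point has its two neighbours within `2 (t - s) / N` of each other; removing it
changes the Riemann sum by at most `K (2 (t - s) / N) ^ θ`, so every Riemann sum is within
`K (2 (t - s)) ^ θ ζ(θ)` of `μ s t` (Young's maximal inequality). Refining the dyadic grid of mesh `2⁻ⁿ`
changes the dyadic Riemann sums by at most `K 2 ^ (n (1 - θ))`, so they converge, and the limit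
`φ` inherits the bound. Two such `φ` differ by a function with increments `O((t - s) ^ θ)`;
summing `n` equal steps shows that it is `O(n ^ (1 - θ)) = o(1)`, hence zero.
-/

open Finset Filter Topology

def skipAt (p k : ℕ) : ℕ := if k < p then k else k + 1

theorem skipAt_of_lt {p k : ℕ} (h : k < p) : skipAt p k = k := if_pos h

theorem skipAt_of_le {p k : ℕ} (h : p ≤ k) : skipAt p k = k + 1 := if_neg (not_lt.mpr h)

theorem monotone_skipAt (p : ℕ) : Monotone (skipAt p) := by
  intro k l hkl
  unfold skipAt
  split_ifs <;> omega

theorem sum_range_eq_sum_skipAt {M : Type*} [AddCommGroup M] (g : ℕ → ℕ → M) {i N : ℕ}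
    (hi : i ≤ N) :
    ∑ k ∈ range (N + 2), g k (k + 1) =
      ∑ k ∈ range (N + 1), g (skipAt (i + 1) k) (skipAt (i + 1) (k + 1)) -
        (g i (i + 2) - (g (i + 1) (i + 2) + g i (i + 1))) := by
  induction N, hi using Nat.le_induction with
  | base =>
    have hlow : ∀ k ∈ range i, g (skipAt (i + 1) k) (skipAt (i + 1) (k + 1)) = g k (k + 1) :=
      fun k hk => by
        have := mem_range.mp hk
        rw [skipAt_of_lt (by omega), skipAt_of_lt (by omega)]
    rw [sum_range_succ, sum_range_succ, sum_range_succ, sum_congr rfl hlow,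
      skipAt_of_lt (Nat.lt_succ_self i), skipAt_of_le le_rfl]
    abel
  | succ N hiN ih =>
    rw [sum_range_succ, ih, sum_range_succ _ (N + 1), skipAt_of_le (by omega),
      skipAt_of_le (by omega)]
    abel

theorem Monotone.exists_two_step_sub_le {π : ℕ → ℝ} (hπ : Monotone π) (N : ℕ) :
    ∃ j ≤ N, π (j + 2) - π j ≤ 2 * (π (N + 2) - π 0) / (N + 1) := by
  have htel : ∑ j ∈ range (N + 1), (π (j + 2) - π j) =
      (π (N + 2) - π 1) + (π (N + 1) - π 0) := by
    rw [← sum_range_sub (fun j => π (j + 1)), ← sum_range_sub π, ← sum_add_distrib]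
    exact sum_congr rfl fun j _ => by ring
  have hsum : ∑ j ∈ range (N + 1), (π (j + 2) - π j) ≤
      ∑ _j ∈ range (N + 1), 2 * (π (N + 2) - π 0) / (N + 1) := by
    rw [htel, sum_const, card_range, nsmul_eq_mul, Nat.cast_succ,
      mul_div_cancel₀ _ (by positivity)]
    linarith [hπ (Nat.zero_le 1), hπ (Nat.le_succ (N + 1))]
  obtain ⟨j, hj, hle⟩ := exists_le_of_sum_le nonempty_range_add_one hsum
  exact ⟨j, Nat.lt_succ_iff.mp (mem_range.mp hj), hle⟩

theorem sum_range_two_mul {M : Type*} [AddCommMonoid M] (m : ℕ) (g : ℕ → M) :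
    ∑ j ∈ range (2 * m), g j = ∑ k ∈ range m, (g (2 * k) + g (2 * k + 1)) := by
  induction m with
  | zero => simp
  | succ m ih => rw [mul_add_one, sum_range_succ, sum_range_succ, sum_range_succ, ih, add_assoc]

theorem inv_two_pow_rpow (n : ℕ) (θ : ℝ) : ((2 : ℝ) ^ n)⁻¹ ^ θ = ((2 : ℝ) ^ (-θ)) ^ n := by
  rw [Real.inv_rpow (by positivity), ← Real.rpow_pow_comm zero_le_two, Real.rpow_neg zero_le_two,
    inv_pow]

theorem min_sub_min_le_sub {x y : ℝ} (hxy : x ≤ y) (t : ℝ) : min y t - min x t ≤ y - x := by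
  have : min y t ≤ min x t + (y - x) := by
    rw [← min_add_add_right]
    exact min_le_min (by linarith) (by linarith)
  linarith

section Sewing

variable {E : Type*} [NormedAddCommGroup E]

def IsAlmostAdditive (μ : ℝ → ℝ → E) (K θ : ℝ) : Prop :=
  ∀ s u t : ℝ, 0 ≤ s → s ≤ u → u ≤ t → t ≤ 1 → ‖μ s t - (μ u t + μ s u)‖ ≤ K * (t - s) ^ θ

def IsSewing (μ : ℝ → ℝ → E) (θ C : ℝ) (φ : ℝ → E) : Prop :=
  ∀ s t : ℝ, 0 ≤ s → s ≤ t → t ≤ 1 → ‖φ t - φ s - μ s t‖ ≤ C * (t - s) ^ θ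

/-- For `t ≤ 1` this is the Riemann sum of `μ` over the dyadic partition of mesh `2⁻ⁿ` of `[0, t]`:
the grid points beyond `t` are moved to `t`. -/
noncomputable def dyadicSum (μ : ℝ → ℝ → E) (n : ℕ) (t : ℝ) : E :=
  ∑ k ∈ range (2 ^ n), μ (min (k / 2 ^ n) t) (min ((k + 1) / 2 ^ n) t)

theorem dyadicSum_zero_right {μ : ℝ → ℝ → E} (hμ : μ 0 0 = 0) (n : ℕ) : dyadicSum μ n 0 = 0 :=
  sum_eq_zero fun k _ => by rw [min_eq_right (by positivity), min_eq_right (by positivity), hμ]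

/-- The difference of the dyadic sums at `t` and at `s` is the Riemann sum over the grid clipped
to `[s, t]`, up to these terms; they vanish except on the grid interval `[x, y]` containing `s`. -/
def clipDefect (μ : ℝ → ℝ → E) (s t x y : ℝ) : E :=
  μ (min x t) (min y t) - μ (min x s) (min y s) - μ (max (min x t) s) (max (min y t) s)

theorem clipDefect_eq_zero {μ : ℝ → ℝ → E} {s t x y : ℝ} (hμs : μ s s = 0) (hxy : x ≤ y)
    (hst : s ≤ t) (h : y ≤ s ∨ s ≤ x) : clipDefect μ s t x y = 0 := by
  unfold clipDefect
  rcases h with h | h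
  · rw [min_eq_left (h.trans hst), min_eq_left ((hxy.trans h).trans hst), min_eq_left h,
      min_eq_left (hxy.trans h), max_eq_right h, max_eq_right (hxy.trans h), hμs, sub_self,
      sub_zero]
  · rw [min_eq_right h, min_eq_right (h.trans hxy), max_eq_left (le_min h hst),
      max_eq_left (le_min (h.trans hxy) hst), hμs, sub_zero, sub_self]

namespace IsAlmostAdditive

variable {μ : ℝ → ℝ → E} {K θ : ℝ}

theorem apply_self (hμ : IsAlmostAdditive μ K θ) (hθ : 0 < θ) {s : ℝ} (hs0 : 0 ≤ s)
    (hs1 : s ≤ 1) : μ s s = 0 := by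
  simpa [Real.zero_rpow hθ.ne'] using hμ s s s hs0 le_rfl le_rfl hs1

theorem norm_defect_le (hμ : IsAlmostAdditive μ K θ) (hK : 0 ≤ K) (hθ : 0 ≤ θ)
    {s u t δ : ℝ} (hs : 0 ≤ s) (hsu : s ≤ u) (hut : u ≤ t) (ht : t ≤ 1) (hδ : t - s ≤ δ) :
    ‖μ s t - (μ u t + μ s u)‖ ≤ K * δ ^ θ := by
  refine (hμ s u t hs hsu hut ht).trans ?_
  gcongr
  linarith

theorem norm_sum_sub_le (hμ : IsAlmostAdditive μ K θ) (hK : 0 ≤ K) (hθ : 0 ≤ θ) (N : ℕ)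
    {π : ℕ → ℝ} (hπ : Monotone π) (h0 : 0 ≤ π 0) (h1 : π (N + 1) ≤ 1) :
    ‖∑ k ∈ range (N + 1), μ (π k) (π (k + 1)) - μ (π 0) (π (N + 1))‖ ≤
      K * (2 * (π (N + 1) - π 0)) ^ θ * ∑ j ∈ range N, ((j : ℝ) + 1) ^ (-θ) := by
  induction N generalizing π with
  | zero => simp
  | succ N ih =>
    obtain ⟨j, hjN, hj⟩ := hπ.exists_two_step_sub_le N
    have hL : 0 ≤ π (N + 2) - π 0 := sub_nonneg.mpr (hπ (Nat.zero_le _))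
    have hrem := ih (hπ.comp (monotone_skipAt (j + 1))) h0 (by
      rwa [Function.comp_apply, skipAt_of_le (by omega)])
    rw [Function.comp_apply, Function.comp_apply, skipAt_of_lt (Nat.succ_pos j),
      skipAt_of_le (show j + 1 ≤ N + 1 by omega)] at hrem
    have hdef := hμ.norm_defect_le hK hθ (h0.trans (hπ (Nat.zero_le j)))
      (hπ (Nat.le_succ j)) (hπ (Nat.le_succ (j + 1))) ((hπ (by omega)).trans h1) hj
    rw [sum_range_eq_sum_skipAt (fun x y => μ (π x) (π y)) hjN]
    calc _ = ‖(∑ k ∈ range (N + 1), μ (π (skipAt (j + 1) k)) (π (skipAt (j + 1) (k + 1))) -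
            μ (π 0) (π (N + 2))) -
          (μ (π j) (π (j + 2)) - (μ (π (j + 1)) (π (j + 2)) + μ (π j) (π (j + 1))))‖ := by
          congr 1; abel
      _ ≤ K * (2 * (π (N + 2) - π 0)) ^ θ * ∑ j ∈ range N, ((j : ℝ) + 1) ^ (-θ) +
          K * (2 * (π (N + 2) - π 0) / (N + 1)) ^ θ :=
          (norm_sub_le _ _).trans (add_le_add hrem hdef)
      _ = _ := by
          rw [sum_range_succ, Real.div_rpow (by linarith) (by positivity),
            Real.rpow_neg (by positivity)]
          ring

theorem norm_clipDefect_le (hμ : IsAlmostAdditive μ K θ) (hK : 0 ≤ K) (hθ : 0 ≤ θ)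
    {s t x y : ℝ} (hx : 0 ≤ x) (hxs : x ≤ s) (hsy : s ≤ y) (hst : s ≤ t) (ht : t ≤ 1) :
    ‖clipDefect μ s t x y‖ ≤ K * (y - x) ^ θ := by
  have hyt : s ≤ min y t := le_min hsy hst
  unfold clipDefect
  rw [min_eq_left (hxs.trans hst), min_eq_left hxs, min_eq_right hsy, max_eq_right hxs,
    max_eq_left hyt, sub_sub, add_comm (μ x s)]
  exact hμ.norm_defect_le hK hθ hx hxs hyt ((min_le_right y t).trans ht)
    (sub_le_sub_right (min_le_left y t) x)

theorem norm_dyadicSum_succ_sub_le (hμ : IsAlmostAdditive μ K θ) (hK : 0 ≤ K) (hθ : 0 ≤ θ)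
    (n : ℕ) {t : ℝ} (ht0 : 0 ≤ t) (ht1 : t ≤ 1) :
    ‖dyadicSum μ (n + 1) t - dyadicSum μ n t‖ ≤ K * ((2 : ℝ) ^ (1 - θ)) ^ n := by
  have hsplit : dyadicSum μ (n + 1) t - dyadicSum μ n t = ∑ k ∈ range (2 ^ n),
      -(μ (min (k / 2 ^ n) t) (min ((k + 1) / 2 ^ n) t) -
        (μ (min ((2 * k + 1) / 2 ^ (n + 1)) t) (min ((k + 1) / 2 ^ n) t) +
          μ (min (k / 2 ^ n) t) (min ((2 * k + 1) / 2 ^ (n + 1)) t))) := by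
    rw [dyadicSum, dyadicSum, pow_succ', sum_range_two_mul, ← sum_sub_distrib]
    refine sum_congr rfl fun k _ => ?_
    have e1 : ((2 * k : ℕ) : ℝ) / 2 ^ (n + 1) = k / 2 ^ n := by push_cast; field_simp; ring
    have e2 : (((2 * k + 1 : ℕ) : ℝ) + 1) / 2 ^ (n + 1) = (k + 1) / 2 ^ n := by
      push_cast; field_simp; ring
    rw [e1, e2]
    push_cast
    abel
  have hterm : ∀ k : ℕ, ‖μ (min (k / 2 ^ n) t) (min ((k + 1) / 2 ^ n) t) -
      (μ (min ((2 * k + 1) / 2 ^ (n + 1)) t) (min ((k + 1) / 2 ^ n) t) +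
        μ (min (k / 2 ^ n) t) (min ((2 * k + 1) / 2 ^ (n + 1)) t))‖ ≤
      K * ((2 : ℝ) ^ n)⁻¹ ^ θ := by
    intro k
    have h2n : (0 : ℝ) < 2 ^ n := by positivity
    have hl : (k : ℝ) / 2 ^ n ≤ (2 * k + 1) / 2 ^ (n + 1) := by
      rw [pow_succ, div_le_div_iff₀ h2n (by positivity)]; nlinarith
    have hr : (2 * k + 1 : ℝ) / 2 ^ (n + 1) ≤ (k + 1) / 2 ^ n := by
      rw [pow_succ, div_le_div_iff₀ (by positivity) h2n]; nlinarith
    have hmesh : ((k : ℝ) + 1) / 2 ^ n - k / 2 ^ n = (2 ^ n)⁻¹ := by field_simp; ring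
    exact hμ.norm_defect_le hK hθ (le_min (by positivity) ht0) (min_le_min_right t hl)
      (min_le_min_right t hr) ((min_le_right _ _).trans ht1)
      ((min_sub_min_le_sub (hl.trans hr) t).trans hmesh.le)
  calc _ ≤ ∑ k ∈ range (2 ^ n), K * ((2 : ℝ) ^ n)⁻¹ ^ θ := by
        rw [hsplit]
        exact (norm_sum_le _ _).trans (sum_le_sum fun k _ => (norm_neg _).trans_le (hterm k))
    _ = K * ((2 : ℝ) ^ (1 - θ)) ^ n := by
        rw [sum_const, card_range, nsmul_eq_mul, inv_two_pow_rpow, sub_eq_add_neg,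
          Real.rpow_add two_pos, Real.rpow_one, mul_pow]
        push_cast
        ring

theorem norm_sum_clipDefect_le (hμ : IsAlmostAdditive μ K θ) (hK : 0 ≤ K) (hθ : 0 < θ) (n : ℕ)
    {s t : ℝ} (hs : 0 ≤ s) (hst : s ≤ t) (ht : t ≤ 1) :
    ‖∑ k ∈ range (2 ^ n), clipDefect μ s t (k / 2 ^ n) ((k + 1) / 2 ^ n)‖ ≤
      K * ((2 : ℝ) ^ (-θ)) ^ n := by
  have h2n : (0 : ℝ) < 2 ^ n := by positivity
  set k₀ := ⌊s * 2 ^ n⌋₊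
  have hk₀ : (k₀ : ℝ) ≤ s * 2 ^ n := Nat.floor_le (by positivity)
  have hk₀' : s * 2 ^ n < k₀ + 1 := Nat.lt_floor_add_one _
  have hsingle : ∀ k ∈ range (2 ^ n), clipDefect μ s t (k / 2 ^ n) ((k + 1) / 2 ^ n) =
      if k = k₀ then clipDefect μ s t (k₀ / 2 ^ n) ((k₀ + 1) / 2 ^ n) else 0 := by
    intro k _
    split_ifs with hk
    · rw [hk]
    refine clipDefect_eq_zero (hμ.apply_self hθ hs (hst.trans ht)) (by gcongr; linarith) hst ?_
    rcases Nat.lt_or_gt_of_ne hk with hlt | hgt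
    · have : (k : ℝ) + 1 ≤ k₀ := by exact_mod_cast hlt
      exact Or.inl ((div_le_iff₀ h2n).mpr (by linarith))
    · have : (k₀ : ℝ) + 1 ≤ k := by exact_mod_cast hgt
      exact Or.inr ((le_div_iff₀ h2n).mpr (by linarith))
  rw [sum_congr rfl hsingle, sum_ite_eq', ← inv_two_pow_rpow]
  split_ifs
  · refine (hμ.norm_clipDefect_le hK hθ.le (by positivity) ((div_le_iff₀ h2n).mpr hk₀)
      ((le_div_iff₀ h2n).mpr hk₀'.le) hst ht).trans_eq ?_
    congr 2
    field_simp
    ring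
  · rw [norm_zero]
    positivity

theorem norm_dyadicSum_sub_sub_le (hμ : IsAlmostAdditive μ K θ) (hK : 0 ≤ K) (hθ : 1 < θ)
    (n : ℕ) {s t : ℝ} (hs : 0 ≤ s) (hst : s ≤ t) (ht : t ≤ 1) :
    ‖dyadicSum μ n t - dyadicSum μ n s - μ s t‖ ≤
      K * (2 * (t - s)) ^ θ * ∑' j : ℕ, ((j : ℝ) + 1) ^ (-θ) + K * ((2 : ℝ) ^ (-θ)) ^ n := by
  set q : ℕ → ℝ := fun k => max (min (k / 2 ^ n) t) s
  have hq : Monotone q := fun i j hij => by dsimp only [q]; gcongr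
  have hq0 : q 0 = s := by simp [q, min_eq_left (hs.trans hst), hs]
  have hqN : q (2 ^ n) = t := by simp [q, ht, hst]
  have hdecomp : dyadicSum μ n t - dyadicSum μ n s - μ s t =
      (∑ k ∈ range (2 ^ n), μ (q k) (q (k + 1)) - μ s t) +
        ∑ k ∈ range (2 ^ n), clipDefect μ s t (k / 2 ^ n) ((k + 1) / 2 ^ n) := by
    simp only [dyadicSum, clipDefect, q, Nat.cast_succ, sum_sub_distrib]
    abel
  obtain ⟨N, hN⟩ : ∃ N, 2 ^ n = N + 1 := Nat.exists_eq_add_one.mpr (Nat.two_pow_pos n)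
  have hyoung := hμ.norm_sum_sub_le hK (by linarith) N hq (hq0 ▸ hs) (hN ▸ hqN ▸ ht)
  rw [← hN, hq0, hqN] at hyoung
  have hsummable : Summable fun j : ℕ => ((j : ℝ) + 1) ^ (-θ) := by
    simpa using (summable_nat_add_iff 1).mpr (Real.summable_nat_rpow.mpr (by linarith : -θ < -1))
  have hpartial : ∑ j ∈ range N, ((j : ℝ) + 1) ^ (-θ) ≤ ∑' j : ℕ, ((j : ℝ) + 1) ^ (-θ) :=
    hsummable.sum_le_tsum _ fun j _ => by positivity
  rw [hdecomp]
  refine (norm_add_le _ _).trans (add_le_add (hyoung.trans ?_)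
    (hμ.norm_sum_clipDefect_le hK (by linarith) n hs hst ht))
  gcongr

theorem exists_isSewing [CompleteSpace E] (hμ : IsAlmostAdditive μ K θ) (hK : 0 ≤ K)
    (hθ : 1 < θ) : ∃ C φ, φ 0 = 0 ∧ IsSewing μ θ C φ := by
  have hθ0 : 0 < θ := by linarith
  have hcauchy : ∀ t, 0 ≤ t → t ≤ 1 → CauchySeq fun n => dyadicSum μ n t := fun t ht0 ht1 =>
    cauchySeq_of_le_geometric ((2 : ℝ) ^ (1 - θ)) K (Real.rpow_lt_one_of_one_lt_of_neg one_lt_two (by linarith))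
      fun n => by
        rw [dist_comm, dist_eq_norm]
        exact hμ.norm_dyadicSum_succ_sub_le hK hθ0.le n ht0 ht1
  set φ : ℝ → E := fun t => limUnder atTop fun n => dyadicSum μ n t
  have hφ : ∀ t, 0 ≤ t → t ≤ 1 → Tendsto (fun n => dyadicSum μ n t) atTop (𝓝 (φ t)) :=
    fun t ht0 ht1 => (hcauchy t ht0 ht1).tendsto_limUnder
  refine ⟨K * 2 ^ θ * ∑' j : ℕ, ((j : ℝ) + 1) ^ (-θ), φ, ?_, ?_⟩
  · have hzero : (fun n => dyadicSum μ n 0) = fun _ => 0 :=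
      funext (dyadicSum_zero_right (hμ.apply_self hθ0 le_rfl zero_le_one))
    exact tendsto_nhds_unique (hφ 0 le_rfl zero_le_one) (hzero ▸ tendsto_const_nhds)
  · intro s t hs hst ht
    have hlim := (((hφ t (hs.trans hst) ht).sub (hφ s hs (hst.trans ht))).sub
      (tendsto_const_nhds (x := μ s t))).norm
    have herr : Tendsto (fun n => K * (2 * (t - s)) ^ θ * ∑' j : ℕ, ((j : ℝ) + 1) ^ (-θ) +
        K * ((2 : ℝ) ^ (-θ)) ^ n) atTop
        (𝓝 (K * (2 * (t - s)) ^ θ * ∑' j : ℕ, ((j : ℝ) + 1) ^ (-θ) + K * 0)) :=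
      tendsto_const_nhds.add ((tendsto_pow_atTop_nhds_zero_of_lt_one (by positivity)
        (Real.rpow_lt_one_of_one_lt_of_neg one_lt_two (by linarith))).const_mul K)
    refine (le_of_tendsto_of_tendsto' hlim herr
      fun n => hμ.norm_dyadicSum_sub_sub_le hK hθ n hs hst ht).trans_eq ?_
    rw [mul_zero, add_zero, Real.mul_rpow zero_le_two (by linarith)]
    ring

end IsAlmostAdditive

theorem eqOn_zero_of_norm_sub_le_rpow {f : ℝ → E} {C θ : ℝ} (hθ : 1 < θ) (hf0 : f 0 = 0)
    (hf : ∀ s t : ℝ, 0 ≤ s → s ≤ t → t ≤ 1 → ‖f t - f s‖ ≤ C * (t - s) ^ θ) :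
    Set.EqOn f 0 (Set.Icc 0 1) := by
  rintro t ⟨ht0, ht1⟩
  have hbound : ∀ n : ℕ, 0 < n → ‖f t‖ ≤ C * t ^ θ * (n : ℝ) ^ (1 - θ) := by
    intro n hn
    have hn' : (0 : ℝ) < n := Nat.cast_pos.mpr hn
    have htel := sum_range_sub (fun k : ℕ => f (k * (t / n))) n
    simp only [Nat.cast_succ, Nat.cast_zero, zero_mul, hf0, sub_zero,
      mul_div_cancel₀ t hn'.ne'] at htel
    have hstep : ∀ k ∈ range n, ‖f ((k + 1) * (t / n)) - f (k * (t / n))‖ ≤ C * (t / n) ^ θ := by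
      intro k hk
      have hk' : (k : ℝ) + 1 ≤ n := by exact_mod_cast mem_range.mp hk
      have hend : ((k : ℝ) + 1) * (t / n) ≤ 1 := by
        calc ((k : ℝ) + 1) * (t / n) ≤ n * (t / n) := by gcongr
          _ = t := mul_div_cancel₀ t hn'.ne'
          _ ≤ 1 := ht1
      simpa [add_mul] using hf (k * (t / n)) ((k + 1) * (t / n)) (by positivity)
        (by nlinarith [div_nonneg ht0 hn'.le]) hend
    calc ‖f t‖ ≤ ∑ k ∈ range n, C * (t / n) ^ θ := htel ▸ norm_sum_le_of_le _ hstep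
      _ = C * t ^ θ * (n : ℝ) ^ (1 - θ) := by
        rw [sum_const, card_range, nsmul_eq_mul, Real.div_rpow ht0 hn'.le,
          Real.rpow_sub hn', Real.rpow_one]
        ring
  have hlim : Tendsto (fun n : ℕ => C * t ^ θ * (n : ℝ) ^ (1 - θ)) atTop (𝓝 0) := by
    have := (tendsto_rpow_neg_atTop (by linarith : 0 < θ - 1)).comp tendsto_natCast_atTop_atTop
    simpa [Function.comp_def, neg_sub] using this.const_mul (C * t ^ θ)
  exact norm_le_zero_iff.mp (ge_of_tendsto hlim (eventually_atTop.mpr ⟨1, hbound⟩))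

theorem IsSewing.eqOn {μ : ℝ → ℝ → E} {θ C₁ C₂ : ℝ} {ψ₁ ψ₂ : ℝ → E}
    (h₁ : IsSewing μ θ C₁ ψ₁) (h₂ : IsSewing μ θ C₂ ψ₂) (hθ : 1 < θ) (h0 : ψ₁ 0 = ψ₂ 0) :
    Set.EqOn ψ₁ ψ₂ (Set.Icc 0 1) := fun t ht => sub_eq_zero.mp <|
  eqOn_zero_of_norm_sub_le_rpow (f := ψ₁ - ψ₂) (C := C₁ + C₂) hθ (sub_eq_zero.mpr h0)
    (fun s t hs hst ht => by
      calc ‖(ψ₁ - ψ₂) t - (ψ₁ - ψ₂) s‖ =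
            ‖(ψ₁ t - ψ₁ s - μ s t) - (ψ₂ t - ψ₂ s - μ s t)‖ := by simp only [Pi.sub_apply]; abel_nf
        _ ≤ C₁ * (t - s) ^ θ + C₂ * (t - s) ^ θ :=
            (norm_sub_le _ _).trans (add_le_add (h₁ s t hs hst ht) (h₂ s t hs hst ht))
        _ = (C₁ + C₂) * (t - s) ^ θ := by ring) ht

end Sewing

theorem isAlmostAdditive_mul_sub {a b : ℝ → ℝ} {H α : ℝ} (hα : 0 ≤ α)
    (ha : ∀ s t : ℝ, 0 ≤ s → s ≤ t → t ≤ 1 → |a t - a s| ≤ H * (t - s) ^ α)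
    (hb : ∀ s t : ℝ, 0 ≤ s → s ≤ t → t ≤ 1 → |b t - b s| ≤ H * (t - s) ^ α) :
    IsAlmostAdditive (fun s t => a s * (b t - b s)) (H ^ 2) (2 * α) := by
  intro s u t hs hsu hut ht
  have hdefect : a s * (b t - b s) - (a u * (b t - b u) + a s * (b u - b s)) =
      -((a u - a s) * (b t - b u)) := by ring
  have ha' := ha s u hs hsu (hut.trans ht)
  have hb' := hb u t (hs.trans hsu) hut ht
  rw [Real.norm_eq_abs, hdefect, abs_neg, abs_mul]
  calc |a u - a s| * |b t - b u| ≤ (H * (u - s) ^ α) * (H * (t - u) ^ α) :=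
        mul_le_mul ha' hb' (abs_nonneg _) ((abs_nonneg _).trans ha')
    _ = H ^ 2 * ((u - s) * (t - u)) ^ α := by
        rw [Real.mul_rpow (by linarith) (by linarith)]; ring
    _ ≤ H ^ 2 * ((t - s) ^ 2) ^ α := by
        gcongr
        nlinarith
    _ = H ^ 2 * (t - s) ^ (2 * α) := by
        rw [Real.rpow_mul (by linarith), Real.rpow_two]

theorem young_integral_general
    (p H : ℝ) (hp1 : 1 ≤ p) (hp2 : p < 2)
    (a b : ℝ → ℝ)
    (ha : ∀ s t : ℝ, 0 ≤ s → s ≤ t → t ≤ 1 → |a t - a s| ≤ H * (t - s) ^ (1 / p))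
    (hb : ∀ s t : ℝ, 0 ≤ s → s ≤ t → t ≤ 1 → |b t - b s| ≤ H * (t - s) ^ (1 / p)) :
    (∀ s u t : ℝ, 0 ≤ s → s ≤ u → u ≤ t → t ≤ 1 →
      |a s * (b t - b s) - (a u * (b t - b u) + a s * (b u - b s))| ≤
        H ^ 2 * (t - s) ^ (2 / p)) ∧
    ∃ C : ℝ, ∃ φ : ℝ → ℝ, φ 0 = 0 ∧
      (∀ s t : ℝ, 0 ≤ s → s ≤ t → t ≤ 1 →
        |φ t - φ s - a s * (b t - b s)| ≤ C * (t - s) ^ (2 / p)) ∧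
      ∀ ψ₁ ψ₂ : ℝ → ℝ, ψ₁ 0 = 0 → ψ₂ 0 = 0 →
        (∃ C₁ : ℝ, ∀ s t : ℝ, 0 ≤ s → s ≤ t → t ≤ 1 →
          |ψ₁ t - ψ₁ s - a s * (b t - b s)| ≤ C₁ * (t - s) ^ (2 / p)) →
        (∃ C₂ : ℝ, ∀ s t : ℝ, 0 ≤ s → s ≤ t → t ≤ 1 →
          |ψ₂ t - ψ₂ s - a s * (b t - b s)| ≤ C₂ * (t - s) ^ (2 / p)) →
        ∀ t : ℝ, 0 ≤ t → t ≤ 1 → ψ₁ t = ψ₂ t := by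
  have hp : 0 < p := by linarith
  have hθ : 1 < 2 / p := (one_lt_div hp).mpr (by linarith)
  have hμ : IsAlmostAdditive (fun s t => a s * (b t - b s)) (H ^ 2) (2 / p) := by
    simpa only [mul_one_div] using isAlmostAdditive_mul_sub (one_div_nonneg.mpr hp.le) ha hb
  obtain ⟨C, φ, hφ0, hφ⟩ := hμ.exists_isSewing (sq_nonneg H) hθ
  refine ⟨hμ, C, φ, hφ0, hφ, ?_⟩
  rintro ψ₁ ψ₂ h₁0 h₂0 ⟨C₁, h₁⟩ ⟨C₂, h₂⟩ t ht0 ht1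
  exact IsSewing.eqOn (μ := fun s t => a s * (b t - b s)) h₁ h₂ hθ (h₁0.trans h₂0.symm)
    ⟨ht0, ht1⟩

/-- **Existence and uniqueness of the Young integral.** For `1 ≤ p < 2` and `(1/p)`-Hölder
functions `a, b : [0,1] → ℝ` with Hölder constant `H`, the germ `μ_{ts} = a_s (b_t - b_s)` is
almost additive with constant `H²` and exponent `2/p > 1`, and consequently there is a constant
`C` and a unique function `φ` vanishing at `0` with
`|φ_t - φ_s - a_s (b_t - b_s)| ≤ C (t-s)^{2/p}`; `φ` is the Young integral `∫₀ᵗ a db`. -/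
theorem young_integral
    (p H : ℝ) (hp1 : 1 ≤ p) (hp2 : p < 2) (hH : 0 ≤ H)
    (a b : ℝ → ℝ)
    (ha : ∀ s t : ℝ, 0 ≤ s → s ≤ t → t ≤ 1 → |a t - a s| ≤ H * (t - s) ^ (1 / p))
    (hb : ∀ s t : ℝ, 0 ≤ s → s ≤ t → t ≤ 1 → |b t - b s| ≤ H * (t - s) ^ (1 / p)) :
    (∀ s u t : ℝ, 0 ≤ s → s ≤ u → u ≤ t → t ≤ 1 →
      |a s * (b t - b s) - (a u * (b t - b u) + a s * (b u - b s))| ≤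
        H ^ 2 * (t - s) ^ (2 / p)) ∧
    ∃ C : ℝ, ∃ φ : ℝ → ℝ, φ 0 = 0 ∧
      (∀ s t : ℝ, 0 ≤ s → s ≤ t → t ≤ 1 →
        |φ t - φ s - a s * (b t - b s)| ≤ C * (t - s) ^ (2 / p)) ∧
      ∀ ψ₁ ψ₂ : ℝ → ℝ, ψ₁ 0 = 0 → ψ₂ 0 = 0 →
        (∃ C₁ : ℝ, ∀ s t : ℝ, 0 ≤ s → s ≤ t → t ≤ 1 →
          |ψ₁ t - ψ₁ s - a s * (b t - b s)| ≤ C₁ * (t - s) ^ (2 / p)) →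
        (∃ C₂ : ℝ, ∀ s t : ℝ, 0 ≤ s → s ≤ t → t ≤ 1 →
          |ψ₂ t - ψ₂ s - a s * (b t - b s)| ≤ C₂ * (t - s) ^ (2 / p)) →
        ∀ t : ℝ, 0 ≤ t → t ≤ 1 → ψ₁ t = ψ₂ t :=
  young_integral_general p H hp1 hp2 a b ha hb
end

section
/- Second-order local expansion of a controlled ODE solution: Let h : [0,1] → ℝ^ℓ be continuously differentiable and let V₁, …, V_ℓ : ℝⁿ → ℝⁿ be twice continuously differentiable, bounded, with bounded first and second derivatives. Let z : [0,1] → ℝⁿ satisfy z_t = z₀ + ∫₀ᵗ Σ_{i=1}^ℓ V_i(z_r) ḣ_r^i dr for all t. Then there is a constant C such that for all 0 ≤ s ≤ t ≤ 1: |z_t − z_s − Σ_{i=1}^ℓ V_i(z_s)(h_t^i − h_s^i) − Σ_{i,j=1}^ℓ DV_j(z_s)[V_i(z_s)] ∫_s^t (h_r^i − h_s^i) ḣ_r^j dr| ≤ C (t − s)³. -/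
/-!
Write `F(r) = ∑ⱼ ḣʲ_r Vⱼ(z_r)`, so that `z_t - z_s = ∫_s^t F`, and
`ρⱼ(r) = Vⱼ(z_r) - Vⱼ(z_s) - ∑ᵢ (hⁱ_r - hⁱ_s) DVⱼ(z_s)[Vᵢ(z_s)]`. The remainder in the theorem is
`∫_s^t ∑ⱼ ḣʲ_r ρⱼ(r) dr`, and by the chain rule
`ρⱼ(r) = ∫_s^r ∑ᵢ ḣⁱ_u (DVⱼ(z_u)[Vᵢ(z_u)] - DVⱼ(z_s)[Vᵢ(z_s)]) du`.
Both `z` and `x ↦ DVⱼ(x)[Vᵢ(x)]` are Lipschitz, so this integrand is `O(u - s)`, whence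
`ρⱼ = O((t - s)²)` and the remainder is `O((t - s)³)`.

Since a non-integrable function has integral `0`, the integral equation does not by itself make
`F` integrable. It does: if integrability on `(0, t]` first failed at `τ`, then `z` would be frozen
at `z_0` beyond `τ`, so `F` would be measurable, hence (being bounded) integrable, on both sides
of `τ`.
-/

open MeasureTheory Set

section IntegralEquation

variable {E : Type*} [NormedAddCommGroup E]

theorem aestronglyMeasurable_Ioo_of_forall_integrableOn_Ioc {f : ℝ → E} {a b : ℝ}
    (hf : ∀ t < b, IntegrableOn f (Ioc a t)) :
    AEStronglyMeasurable f (volume.restrict (Ioo a b)) := by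
  have hcover : ⋃ n : ℕ, Ioc a (b - 1 / (n + 1)) = Ioo a b := by
    ext x
    simp only [mem_iUnion, mem_Ioc, mem_Ioo]
    constructor
    · rintro ⟨n, hax, hxb⟩
      exact ⟨hax, hxb.trans_lt (sub_lt_self b Nat.one_div_pos_of_nat)⟩
    · rintro ⟨hax, hxb⟩
      obtain ⟨n, hn⟩ := exists_nat_one_div_lt (sub_pos.2 hxb)
      exact ⟨n, hax, by linarith⟩
  rw [← hcover, aestronglyMeasurable_iUnion_iff]
  exact fun n => (hf _ (sub_lt_self b Nat.one_div_pos_of_nat)).aestronglyMeasurable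

variable [NormedSpace ℝ E] {Φ : ℝ → E → E} {z : ℝ → E} {T B : ℝ}

theorem intervalIntegrable_of_forall_eq_add_integral
    (hΦ : ∀ x, AEStronglyMeasurable (Φ · x)) (hB : ∀ r ∈ Icc 0 T, ∀ x, ‖Φ r x‖ ≤ B)
    (hz : ∀ t ∈ Icc 0 T, z t = z 0 + ∫ r in 0..t, Φ r (z r)) (hT : 0 ≤ T) :
    IntervalIntegrable (fun r => Φ r (z r)) volume 0 T := by
  set f := fun r => Φ r (z r)
  have hbdd : ∀ S ⊆ Ioc 0 T, AEStronglyMeasurable f (volume.restrict S) → IntegrableOn f S :=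
    fun S hS hm => ⟨hm, .restrict_of_bounded (C := B)
      ((measure_mono (hS.trans Ioc_subset_Icc_self)).trans_lt measure_Icc_lt_top)
      (ae_restrict_of_ae_restrict_of_subset hS <| ae_restrict_of_forall_mem measurableSet_Ioc
        fun x hx => hB x (Ioc_subset_Icc_self hx) (z x))⟩
  rw [intervalIntegrable_iff_integrableOn_Ioc_of_le hT]
  by_contra hbad
  set A := {t | ¬ IntegrableOn f (Ioc 0 t)}
  have hA_pos : ∀ t ∈ A, 0 < t := fun t ht =>
    not_le.1 fun h0 => ht (by simp [Ioc_eq_empty_of_le h0])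
  have hA : BddBelow A := ⟨0, fun t ht => (hA_pos t ht).le⟩
  set τ := sInf A
  have hτ0 : 0 ≤ τ := le_csInf ⟨T, hbad⟩ fun t ht => (hA_pos t ht).le
  have hτT : τ ≤ T := csInf_le hA hbad
  have hlow : ∀ t < τ, IntegrableOn f (Ioc 0 t) := fun t ht => not_not.1 (notMem_of_lt_csInf ht hA)
  have hconst : ∀ t ∈ Ioc τ T, z t = z 0 := by
    intro t ht
    obtain ⟨t', ht'A, ht't⟩ := exists_lt_of_csInf_lt ⟨T, hbad⟩ ht.1
    have : ¬ IntegrableOn f (Ioc 0 t) := fun hi => ht'A (hi.mono_set (Ioc_subset_Ioc_right ht't.le))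
    rw [hz t ⟨hτ0.trans ht.1.le, ht.2⟩, intervalIntegral.integral_of_le (hτ0.trans ht.1.le),
      integral_undef this, add_zero]
  have hleft : IntegrableOn f (Ioc 0 τ) := (integrableOn_Ioc_iff_integrableOn_Ioo (f := f)).2 <|
    hbdd _ (Ioo_subset_Ioc_self.trans (Ioc_subset_Ioc_right hτT))
      (aestronglyMeasurable_Ioo_of_forall_integrableOn_Ioc hlow)
  have hright : IntegrableOn f (Ioc τ T) := hbdd _ (Ioc_subset_Ioc_left hτ0) <|
    (hΦ (z 0)).restrict.congr <| (ae_restrict_iff' measurableSet_Ioc).2 <|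
      ae_of_all _ fun t ht => by simp only [f, hconst t ht]
  exact hbad (by simpa [Ioc_union_Ioc_eq_Ioc hτ0 hτT] using hleft.union hright)

theorem continuousOn_of_forall_eq_add_integral
    (hΦ : ∀ x, AEStronglyMeasurable (Φ · x)) (hB : ∀ r ∈ Icc 0 T, ∀ x, ‖Φ r x‖ ≤ B)
    (hz : ∀ t ∈ Icc 0 T, z t = z 0 + ∫ r in 0..t, Φ r (z r)) (hT : 0 ≤ T) :
    ContinuousOn z (Icc 0 T) := by
  have hprim := intervalIntegral.continuousOn_primitive_interval'
    (intervalIntegrable_of_forall_eq_add_integral hΦ hB hz hT) left_mem_uIcc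
  rw [uIcc_of_le hT] at hprim
  exact (continuousOn_const.add hprim).congr hz

theorem hasDerivAt_of_forall_eq_add_integral [CompleteSpace E]
    (hΦ : Continuous (Function.uncurry Φ)) (hB : ∀ r ∈ Icc 0 T, ∀ x, ‖Φ r x‖ ≤ B)
    (hz : ∀ t ∈ Icc 0 T, z t = z 0 + ∫ r in 0..t, Φ r (z r)) :
    ∀ u ∈ Ioo 0 T, HasDerivAt z (Φ u (z u)) u := by
  intro u hu
  have hT : 0 ≤ T := hu.1.le.trans hu.2.le
  have hmeas : ∀ x, AEStronglyMeasurable (Φ · x) := fun x =>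
    (hΦ.comp (continuous_id.prodMk continuous_const)).aestronglyMeasurable
  have hzc := continuousOn_of_forall_eq_add_integral hmeas hB hz hT
  have hfc : ContinuousOn (fun r => Φ r (z r)) (Ioo 0 T) :=
    hΦ.comp_continuousOn (continuousOn_id.prodMk (hzc.mono Ioo_subset_Icc_self))
  have hint : IntervalIntegrable (fun r => Φ r (z r)) volume 0 u :=
    (intervalIntegrable_of_forall_eq_add_integral hmeas hB hz hT).mono_set
      (uIcc_subset_uIcc_left (by rw [uIcc_of_le hT]; exact Ioo_subset_Icc_self hu))
  have hprim := intervalIntegral.integral_hasDerivAt_right hint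
    (hfc.stronglyMeasurableAtFilter isOpen_Ioo u hu) (hfc.continuousAt (isOpen_Ioo.mem_nhds hu))
  exact (hprim.const_add (z 0)).congr_of_eventuallyEq
    (Filter.eventually_of_mem (Icc_mem_nhds hu.1 hu.2) hz)

end IntegralEquation

section ControlledPath

variable {ι E G : Type*} [Fintype ι] [NormedAddCommGroup E] [NormedSpace ℝ E]
  [NormedAddCommGroup G] [NormedSpace ℝ G]

theorem norm_sum_smul_le {c : ι → ℝ} {v : ι → E} {K A : ℝ} (hc : ∀ i, |c i| ≤ K)
    (hv : ∀ i, ‖v i‖ ≤ A) : ‖∑ i, c i • v i‖ ≤ Fintype.card ι * K * A := by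
  calc ‖∑ i, c i • v i‖ ≤ ∑ i, ‖c i • v i‖ := norm_sum_le _ _
    _ ≤ ∑ _i : ι, K * A := Finset.sum_le_sum fun i _ => by
        rw [norm_smul, Real.norm_eq_abs]
        exact mul_le_mul (hc i) (hv i) (norm_nonneg _) ((abs_nonneg _).trans (hc i))
    _ = Fintype.card ι * K * A := by simp [mul_assoc]

theorem intervalIntegral.integral_sum_smul_const [CompleteSpace E] {κ : Type*} [Fintype κ]
    {c : κ → ℝ → ℝ} {a b : ℝ} (hc : ∀ k, IntervalIntegrable (c k) volume a b) (w : κ → E) :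
    ∫ r in a..b, ∑ k, c k r • w k = ∑ k, (∫ r in a..b, c k r) • w k := by
  rw [intervalIntegral.integral_finsetSum fun k _ => (hc k).smul_continuousOn continuousOn_const]
  simp only [intervalIntegral.integral_smul_const]

theorem norm_fderiv_sub_fderiv_le {f : E → G} {M : ℝ} (hf : ContDiff ℝ 2 f)
    (hf2 : ∀ x, ‖iteratedFDeriv ℝ 2 f x‖ ≤ M) (x y : E) :
    ‖fderiv ℝ f x - fderiv ℝ f y‖ ≤ M * ‖x - y‖ :=
  Convex.norm_image_sub_le_of_norm_fderiv_le
    (fun w _ => (hf.fderiv_right (m := 1) (by norm_num)).differentiable one_ne_zero w)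
    (fun w _ => by rw [← norm_iteratedFDeriv_one, norm_iteratedFDeriv_fderiv]; exact hf2 w)
    convex_univ (mem_univ y) (mem_univ x)

theorem norm_fderiv_apply_sub_fderiv_apply_le {f : E → G} {g : E → E} {M : ℝ}
    (hf : ContDiff ℝ 2 f) (hg : Differentiable ℝ g) (hf1 : ∀ x, ‖fderiv ℝ f x‖ ≤ M)
    (hf2 : ∀ x, ‖iteratedFDeriv ℝ 2 f x‖ ≤ M) (hg0 : ∀ x, ‖g x‖ ≤ M)
    (hg1 : ∀ x, ‖fderiv ℝ g x‖ ≤ M) (x y : E) :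
    ‖fderiv ℝ f x (g x) - fderiv ℝ f y (g y)‖ ≤ 2 * M ^ 2 * ‖x - y‖ := by
  have hM : 0 ≤ M := (norm_nonneg _).trans (hg0 x)
  have hg_lip : ‖g x - g y‖ ≤ M * ‖x - y‖ :=
    Convex.norm_image_sub_le_of_norm_fderiv_le (fun w _ => hg w) (fun w _ => hg1 w)
      convex_univ (mem_univ y) (mem_univ x)
  calc ‖fderiv ℝ f x (g x) - fderiv ℝ f y (g y)‖
      = ‖(fderiv ℝ f x - fderiv ℝ f y) (g x) + fderiv ℝ f y (g x - g y)‖ := by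
        rw [sub_apply, map_sub, sub_add_sub_cancel]
    _ ≤ ‖fderiv ℝ f x - fderiv ℝ f y‖ * ‖g x‖ + ‖fderiv ℝ f y‖ * ‖g x - g y‖ :=
        norm_add_le_of_le (ContinuousLinearMap.le_opNorm _ _) (ContinuousLinearMap.le_opNorm _ _)
    _ ≤ (M * ‖x - y‖) * M + M * (M * ‖x - y‖) := by
        gcongr
        exacts [norm_fderiv_sub_fderiv_le hf hf2 x y, hg0 x, hf1 y]
    _ = 2 * M ^ 2 * ‖x - y‖ := by ring

variable {h : ℝ → ι → ℝ} {V : ι → E → E} {z : ℝ → E} {s t K M : ℝ}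

theorem continuous_deriv_apply (hh : ContDiff ℝ 1 h) (i : ι) :
    Continuous (deriv fun u => h u i) :=
  (contDiff_pi.1 hh i).continuous_deriv le_rfl

theorem exists_abs_deriv_apply_le (hh : ContDiff ℝ 1 h) (a b : ℝ) :
    ∃ K, 0 ≤ K ∧ ∀ i, ∀ r ∈ Icc a b, |deriv (fun u => h u i) r| ≤ K := by
  obtain ⟨C, hC⟩ := (isCompact_Icc (a := a) (b := b)).exists_bound_of_continuousOn
    (continuous_pi (continuous_deriv_apply hh)).continuousOn
  exact ⟨max C 0, le_max_right _ _, fun i r hr => (norm_le_pi_norm _ i).trans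
    ((hC r hr).trans (le_max_left _ _))⟩

theorem sub_eq_integral_sum_smul_fderiv [CompleteSpace G] (hh : ContDiff ℝ 1 h)
    (hV : ∀ i, Continuous (V i)) {g : E → G} (hg : ContDiff ℝ 1 g)
    (hzc : ContinuousOn z (Icc s t))
    (hzd : ∀ u ∈ Ioo s t, HasDerivAt z (∑ i, deriv (fun v => h v i) u • V i (z u)) u) :
    ∀ r ∈ Icc s t, g (z r) - g (z s) =
      ∫ u in s..r, ∑ i, deriv (fun v => h v i) u • fderiv ℝ g (z u) (V i (z u)) := by
  intro r hr
  have hzc' : ContinuousOn z (Icc s r) := hzc.mono (Icc_subset_Icc_right hr.2)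
  refine (intervalIntegral.integral_eq_sub_of_hasDerivAt_of_le hr.1
    ((hg.continuous).comp_continuousOn hzc') (fun u hu => ?_) ?_).symm
  · simpa only [map_sum, map_smul] using
      (hg.differentiable one_ne_zero (z u)).hasFDerivAt.comp_hasDerivAt u
        (hzd u ⟨hu.1, hu.2.trans_le hr.2⟩)
  · refine ContinuousOn.intervalIntegrable ?_
    rw [uIcc_of_le hr.1]
    have hDg := (hg.continuous_fderiv one_ne_zero).comp_continuousOn hzc'
    have hh' := continuous_deriv_apply hh
    fun_prop

theorem norm_integral_sum_smul_sub_sum_smul_le [CompleteSpace E] (hh : ContDiff ℝ 1 h)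
    {b : ι → ℝ → E} (hb : ∀ i, ContinuousOn (b i) (Icc s t)) (a : ι → E) {A : ℝ}
    (hK : ∀ i, ∀ r ∈ Icc s t, |deriv (fun u => h u i) r| ≤ K)
    (hA : ∀ i, ∀ r ∈ Icc s t, ‖b i r - a i‖ ≤ A) :
    ∀ r ∈ Icc s t, ‖(∫ u in s..r, ∑ i, deriv (fun v => h v i) u • b i u)
      - ∑ i, (h r i - h s i) • a i‖ ≤ Fintype.card ι * K * A * (r - s) := by
  intro r hr
  have hsub : Icc s r ⊆ Icc s t := Icc_subset_Icc_right hr.2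
  have hh' := continuous_deriv_apply hh
  have hincr : ∑ i, (h r i - h s i) • a i = ∫ u in s..r, ∑ i, deriv (fun v => h v i) u • a i := by
    rw [intervalIntegral.integral_sum_smul_const fun i => (hh' i).intervalIntegrable s r]
    refine Finset.sum_congr rfl fun i _ => ?_
    rw [intervalIntegral.integral_deriv_eq_sub
      (fun u _ => (contDiff_pi.1 hh i).differentiable one_ne_zero u)
      ((hh' i).intervalIntegrable s r)]
  have hbint : IntervalIntegrable (fun u => ∑ i, deriv (fun v => h v i) u • b i u) volume s r := by
    refine ContinuousOn.intervalIntegrable ?_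
    rw [uIcc_of_le hr.1]
    exact continuousOn_finsetSum _ fun i _ => (hh' i).continuousOn.smul ((hb i).mono hsub)
  have haint : IntervalIntegrable (fun u => ∑ i, deriv (fun v => h v i) u • a i) volume s r :=
    Continuous.intervalIntegrable (by fun_prop) s r
  rw [hincr, ← intervalIntegral.integral_sub hbint haint,
    ← abs_of_nonneg (sub_nonneg.2 hr.1)]
  refine intervalIntegral.norm_integral_le_of_norm_le_const fun u hu => ?_
  rw [uIoc_of_le hr.1] at hu
  have hu' : u ∈ Icc s t := hsub (Ioc_subset_Icc_self hu)
  rw [← Finset.sum_sub_distrib]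
  simp only [← smul_sub]
  exact norm_sum_smul_le (fun i => hK i u hu') (fun i => hA i u hu')

theorem integral_sum_deriv_smul_sum_sub_smul [CompleteSpace E] (hh : ContDiff ℝ 1 h)
    (w : ι → ι → E) :
    ∫ r in s..t, ∑ j, deriv (fun u => h u j) r • ∑ i, (h r i - h s i) • w j i =
      ∑ i, ∑ j, (∫ r in s..t, (h r i - h s i) * deriv (fun u => h u j) r) • w j i := by
  have hc : ∀ i j, Continuous fun r => (h r i - h s i) * deriv (fun u => h u j) r := fun i j =>
    ((continuous_apply i |>.comp hh.continuous).sub continuous_const).mul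
      (continuous_deriv_apply hh j)
  calc ∫ r in s..t, ∑ j, deriv (fun u => h u j) r • ∑ i, (h r i - h s i) • w j i
      = ∫ r in s..t, ∑ j, ∑ i, ((h r i - h s i) * deriv (fun u => h u j) r) • w j i := by
        simp only [Finset.smul_sum, smul_smul, mul_comm]
    _ = ∑ j, ∫ r in s..t, ∑ i, ((h r i - h s i) * deriv (fun u => h u j) r) • w j i :=
        intervalIntegral.integral_finsetSum fun j _ =>
          (continuous_finsetSum _ fun i _ => (hc i j).smul continuous_const).intervalIntegrable _ _
    _ = ∑ i, ∑ j, (∫ r in s..t, (h r i - h s i) * deriv (fun u => h u j) r) • w j i := by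
        rw [Finset.sum_comm]
        exact Finset.sum_congr rfl fun j _ => intervalIntegral.integral_sum_smul_const
          (fun i => (hc i j).intervalIntegrable _ _) (w j)

theorem sub_eq_integral_sum_smul [CompleteSpace E] (hh : ContDiff ℝ 1 h)
    (hV : ∀ i, Continuous (V i)) (hzc : ContinuousOn z (Icc s t))
    (hzd : ∀ u ∈ Ioo s t, HasDerivAt z (∑ i, deriv (fun v => h v i) u • V i (z u)) u) :
    ∀ r ∈ Icc s t, z r - z s = ∫ u in s..r, ∑ i, deriv (fun v => h v i) u • V i (z u) := by
  simpa using sub_eq_integral_sum_smul_fderiv hh hV contDiff_id hzc hzd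

theorem norm_sub_le_of_hasDerivAt_sum_smul [CompleteSpace E] (hh : ContDiff ℝ 1 h)
    (hV : ∀ i, Continuous (V i)) (hV0 : ∀ i x, ‖V i x‖ ≤ M)
    (hK : ∀ i, ∀ r ∈ Icc s t, |deriv (fun u => h u i) r| ≤ K) (hzc : ContinuousOn z (Icc s t))
    (hzd : ∀ u ∈ Ioo s t, HasDerivAt z (∑ i, deriv (fun v => h v i) u • V i (z u)) u) :
    ∀ r ∈ Icc s t, ‖z r - z s‖ ≤ Fintype.card ι * K * M * (r - s) := fun r hr => by
  simpa [sub_eq_integral_sum_smul hh hV hzc hzd r hr] using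
    norm_integral_sum_smul_sub_sum_smul_le hh (fun i => (hV i).comp_continuousOn hzc) 0 hK
      (fun i u _ => by simpa using hV0 i (z u)) r hr

theorem norm_sub_sub_sum_smul_fderiv_le [CompleteSpace E] (hh : ContDiff ℝ 1 h)
    (hV : ∀ i, ContDiff ℝ 2 (V i)) (hK₀ : 0 ≤ K) (hM : 0 ≤ M)
    (hV0 : ∀ i x, ‖V i x‖ ≤ M) (hV1 : ∀ i x, ‖fderiv ℝ (V i) x‖ ≤ M)
    (hV2 : ∀ i x, ‖iteratedFDeriv ℝ 2 (V i) x‖ ≤ M)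
    (hK : ∀ i, ∀ r ∈ Icc s t, |deriv (fun u => h u i) r| ≤ K) (hzc : ContinuousOn z (Icc s t))
    (hzd : ∀ u ∈ Ioo s t, HasDerivAt z (∑ i, deriv (fun v => h v i) u • V i (z u)) u) (j : ι) :
    ∀ r ∈ Icc s t, ‖V j (z r) - V j (z s)
        - ∑ i, (h r i - h s i) • fderiv ℝ (V j) (z s) (V i (z s))‖ ≤
      2 * (Fintype.card ι * K) ^ 2 * M ^ 3 * (t - s) ^ 2 := by
  intro r hr
  set c : ℝ := (Fintype.card ι : ℝ)
  have hVc : ∀ i, Continuous (V i) := fun i => (hV i).continuous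
  have hDV : ContinuousOn (fun u => fderiv ℝ (V j) (z u)) (Icc s t) :=
    ((hV j).continuous_fderiv (by norm_num)).comp_continuousOn hzc
  have hz_lip := norm_sub_le_of_hasDerivAt_sum_smul hh hVc hV0 hK hzc hzd
  rw [sub_eq_integral_sum_smul_fderiv hh hVc ((hV j).of_le one_le_two) hzc hzd r hr]
  refine (norm_integral_sum_smul_sub_sum_smul_le hh
    (fun i => hDV.clm_apply ((hVc i).comp_continuousOn hzc)) _ hK
    (A := 2 * M ^ 2 * (c * K * M * (t - s))) (fun i u hu => ?_) r hr).trans ?_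
  · refine (norm_fderiv_apply_sub_fderiv_apply_le (hV j) ((hV i).differentiable (by norm_num))
      (hV1 j) (hV2 j) (hV0 i) (hV1 i) (z u) (z s)).trans ?_
    gcongr
    exact (hz_lip u hu).trans (by gcongr; exact hu.2)
  · have hts : 0 ≤ t - s := sub_nonneg.2 (hr.1.trans hr.2)
    calc c * K * (2 * M ^ 2 * (c * K * M * (t - s))) * (r - s)
        = 2 * (c * K) ^ 2 * M ^ 3 * (t - s) * (r - s) := by ring
      _ ≤ 2 * (c * K) ^ 2 * M ^ 3 * (t - s) * (t - s) := by gcongr; exact hr.2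
      _ = 2 * (c * K) ^ 2 * M ^ 3 * (t - s) ^ 2 := by ring

theorem norm_controlled_second_order_remainder_le [CompleteSpace E] (hh : ContDiff ℝ 1 h)
    (hV : ∀ i, ContDiff ℝ 2 (V i)) (hK₀ : 0 ≤ K) (hM : 0 ≤ M)
    (hV0 : ∀ i x, ‖V i x‖ ≤ M) (hV1 : ∀ i x, ‖fderiv ℝ (V i) x‖ ≤ M)
    (hV2 : ∀ i x, ‖iteratedFDeriv ℝ 2 (V i) x‖ ≤ M)
    (hK : ∀ i, ∀ r ∈ Icc s t, |deriv (fun u => h u i) r| ≤ K) (hst : s ≤ t)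
    (hzc : ContinuousOn z (Icc s t))
    (hzd : ∀ u ∈ Ioo s t, HasDerivAt z (∑ i, deriv (fun v => h v i) u • V i (z u)) u) :
    ‖z t - z s - ∑ i, (h t i - h s i) • V i (z s)
        - ∑ i, ∑ j, (∫ r in s..t, (h r i - h s i) * deriv (fun u => h u j) r) •
            fderiv ℝ (V j) (z s) (V i (z s))‖ ≤
      2 * (Fintype.card ι * K) ^ 3 * M ^ 3 * (t - s) ^ 3 := by
  have hhc : Continuous h := hh.continuous
  have hh' := continuous_deriv_apply hh
  have hzV : ∀ i, ContinuousOn (fun u => V i (z u)) (Icc s t) := fun i =>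
    (hV i).continuous.comp_continuousOn hzc
  set W : ι → ι → E := fun j i => fderiv ℝ (V j) (z s) (V i (z s))
  have hexp : z t - z s - ∑ i, (h t i - h s i) • V i (z s)
      - ∑ i, ∑ j, (∫ r in s..t, (h r i - h s i) * deriv (fun u => h u j) r) • W j i =
      (∫ r in s..t, ∑ j, deriv (fun u => h u j) r • (V j (z r) - ∑ i, (h r i - h s i) • W j i))
        - ∑ j, (h t j - h s j) • V j (z s) := by
    have hI1 :
        IntervalIntegrable (fun r => ∑ j, deriv (fun u => h u j) r • V j (z r)) volume s t := by
      refine ContinuousOn.intervalIntegrable ?_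
      rw [uIcc_of_le hst]
      exact continuousOn_finsetSum _ fun j _ => (hh' j).continuousOn.smul (hzV j)
    have hI2 : IntervalIntegrable
        (fun r => ∑ j, deriv (fun u => h u j) r • ∑ i, (h r i - h s i) • W j i) volume s t :=
      Continuous.intervalIntegrable (by fun_prop) s t
    rw [sub_eq_integral_sum_smul hh (fun i => (hV i).continuous) hzc hzd t ⟨hst, le_rfl⟩,
      ← integral_sum_deriv_smul_sum_sub_smul hh W, sub_right_comm,
      ← intervalIntegral.integral_sub hI1 hI2]
    simp only [smul_sub, Finset.sum_sub_distrib]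
  have hb : ∀ j, ContinuousOn (fun r => V j (z r) - ∑ i, (h r i - h s i) • W j i) (Icc s t) :=
    fun j => (hzV j).sub (Continuous.continuousOn (by fun_prop))
  rw [hexp]
  refine (norm_integral_sum_smul_sub_sum_smul_le hh hb (fun j => V j (z s)) hK
    (A := 2 * (Fintype.card ι * K) ^ 2 * M ^ 3 * (t - s) ^ 2) (fun j r hr => ?_) t
    ⟨hst, le_rfl⟩).trans_eq (by ring)
  rw [sub_right_comm]
  exact norm_sub_sub_sum_smul_fderiv_le hh hV hK₀ hM hV0 hV1 hV2 hK hzc hzd j r hr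

end ControlledPath

/-- **Second-order local expansion of a controlled ODE solution.** If `z` solves
`ż_t = ∑ᵢ Vᵢ(z_t) ḣ_t^i` with `h` of class `C¹` and the vector fields `Vᵢ` of class `C²`,
bounded with bounded first and second derivatives, then
`z_t = z_s + ∑ᵢ Vᵢ(z_s)(h_t^i - h_s^i) + ∑_{i,j} DVⱼ(z_s)[Vᵢ(z_s)] ∫_s^t (h_r^i - h_s^i) ḣ_r^j dr
+ O((t-s)³)` uniformly over `0 ≤ s ≤ t ≤ 1`. -/
theorem controlled_ode_second_order_expansion
    (ℓ n : ℕ) (h : ℝ → (Fin ℓ → ℝ)) (hh : ContDiff ℝ 1 h)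
    (V : Fin ℓ → (Fin n → ℝ) → (Fin n → ℝ))
    (hV : ∀ i, ContDiff ℝ 2 (V i))
    (M : ℝ)
    (hVb0 : ∀ i x, ‖V i x‖ ≤ M)
    (hVb1 : ∀ i x, ‖fderiv ℝ (V i) x‖ ≤ M)
    (hVb2 : ∀ i x, ‖iteratedFDeriv ℝ 2 (V i) x‖ ≤ M)
    (z : ℝ → (Fin n → ℝ))
    (hz : ∀ t : ℝ, z t = z 0 + ∫ r in (0:ℝ)..t, ∑ i, deriv (fun u => h u i) r • V i (z r)) :
    ∃ C : ℝ, ∀ s t : ℝ, 0 ≤ s → s ≤ t → t ≤ 1 →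
      ‖z t - z s - ∑ i, (h t i - h s i) • V i (z s)
          - ∑ i, ∑ j, (∫ r in s..t, (h r i - h s i) * deriv (fun u => h u j) r) •
              fderiv ℝ (V j) (z s) (V i (z s))‖ ≤ C * (t - s) ^ 3 := by
  obtain ⟨K, hK₀, hK⟩ := exists_abs_deriv_apply_le hh 0 1
  set N := max M 0
  have hN0 : ∀ i x, ‖V i x‖ ≤ N := fun i x => (hVb0 i x).trans (le_max_left M 0)
  have hN1 : ∀ i x, ‖fderiv ℝ (V i) x‖ ≤ N := fun i x => (hVb1 i x).trans (le_max_left M 0)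
  have hN2 : ∀ i x, ‖iteratedFDeriv ℝ 2 (V i) x‖ ≤ N := fun i x =>
    (hVb2 i x).trans (le_max_left M 0)
  set Φ : ℝ → (Fin n → ℝ) → (Fin n → ℝ) := fun r x => ∑ i, deriv (fun u => h u i) r • V i x
  have hΦ : Continuous (Function.uncurry Φ) := by
    have := continuous_deriv_apply hh
    have := fun i => (hV i).continuous
    fun_prop
  have hΦB : ∀ r ∈ Icc (0 : ℝ) 1, ∀ x, ‖Φ r x‖ ≤ Fintype.card (Fin ℓ) * K * N :=
    fun r hr x => norm_sum_smul_le (fun i => hK i r hr) (fun i => hN0 i x)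
  have hz' : ∀ t ∈ Icc (0 : ℝ) 1, z t = z 0 + ∫ r in 0..t, Φ r (z r) := fun t _ => hz t
  have hzc := continuousOn_of_forall_eq_add_integral
    (fun x => (hΦ.comp (continuous_id.prodMk continuous_const)).aestronglyMeasurable) hΦB hz'
    zero_le_one
  have hzd := hasDerivAt_of_forall_eq_add_integral hΦ hΦB hz'
  refine ⟨2 * (Fintype.card (Fin ℓ) * K) ^ 3 * N ^ 3, fun s t hs hst ht => ?_⟩
  exact norm_controlled_second_order_remainder_le hh hV hK₀ (le_max_right M 0) hN0 hN1 hN2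
    (fun i r hr => hK i r ⟨hs.trans hr.1, hr.2.trans ht⟩) hst (hzc.mono (Icc_subset_Icc hs ht))
    (fun u hu => hzd u ⟨hs.trans_lt hu.1, hu.2.trans_le ht⟩)
end

section
/- Almost additivity of the rough integrand (Lemma on the rough integral): Let 2 < p < 3, let ω be a superadditive nonnegative function on {0 ≤ s ≤ t ≤ 1}, and let X : {0 ≤ s ≤ t ≤ 1} → ℝ^d and 𝕏 : {0 ≤ s ≤ t ≤ 1} → ℝ^d ⊗ ℝ^d satisfy Chen's relations, with |X_{st}| ≤ ω(s,t)^{1/p} and |𝕏_{st}| ≤ ω(s,t)^{2/p} for all s ≤ t. Let a : [0,1] → L(ℝ^d, ℝⁿ) and a′ : [0,1] → L(ℝ^d ⊗ ℝ^d, ℝⁿ) be such that |a′_t − a′_s| ≤ ω(s,t)^{1/p} and |a_t − a_s − a′_s(X_{st} ⊗ ·)| ≤ ω(s,t)^{2/p} for all s ≤ t, in the sense that the linear map v ↦ a_t v − a_s v − a′_s(X_{st} ⊗ v) has operator norm at most ω(s,t)^{2/p}. Define μ_{ts} = a_s X_{st} + a′_s(𝕏_{st}) ∈ ℝⁿ.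 Then for all 0 ≤ s ≤ u ≤ t ≤ 1: |μ_{ts} − (μ_{tu} + μ_{us})| ≤ 2 ω(s,t)^{3/p}. -/
/-! By Chen's relations the defect `μ_{ts} - (μ_{tu} + μ_{us})` equals
`-R^a_{su}(X_{ut}) - (a'_u - a'_s)(𝕏_{ut})`: the first-order terms cancel and the cross term
`X_{su} ⊗ X_{ut}` of `𝕏_{st}` completes the remainder of `a`. The two terms are bounded by
`ω(s,u)^{2/p} ω(u,t)^{1/p}` and `ω(s,u)^{1/p} ω(u,t)^{2/p}`, and by superadditivity each factor
is at most the corresponding power of `ω(s,t)`. -/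

theorem ContinuousLinearMap.sewing_defect_eq {R E T F : Type*} [Ring R]
    [TopologicalSpace E] [AddCommGroup E] [Module R E]
    [TopologicalSpace T] [AddCommGroup T] [Module R T]
    [TopologicalSpace F] [AddCommGroup F] [Module R F] [IsTopologicalAddGroup F]
    (A B : E →L[R] F) (A' B' : T →L[R] F) (x y : E) (xx yy c : T) :
    (A (x + y) + A' (xx + yy + c)) - ((B y + B' yy) + (A x + A' xx)) =
      -(B y - A y - A' c) - (B' - A') yy := by
  simp only [map_add, sub_apply]
  abel

theorem Real.rpow_mul_rpow_le_rpow {x y z α β γ : ℝ} (hx : 0 ≤ x) (hy : 0 ≤ y)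
    (hxz : x ≤ z) (hyz : y ≤ z) (hα : 0 ≤ α) (hβ : 0 ≤ β) (hγ : α + β = γ) :
    x ^ α * y ^ β ≤ z ^ γ := by
  have hz : 0 ≤ z := hx.trans hxz
  calc x ^ α * y ^ β ≤ z ^ α * z ^ β := by gcongr
    _ = z ^ γ := by rw [← hγ, Real.rpow_add_of_nonneg hz hα hβ]

theorem rough_integrand_almost_additive_general
    (p : ℝ) (hp1 : 2 < p) (d n : ℕ)
    (ω : ℝ → ℝ → ℝ)
    (hω_nonneg : ∀ s t : ℝ, 0 ≤ s → s ≤ t → t ≤ 1 → 0 ≤ ω s t)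
    (hω_super : ∀ s u t : ℝ, 0 ≤ s → s ≤ u → u ≤ t → t ≤ 1 → ω s u + ω u t ≤ ω s t)
    (X : ℝ → ℝ → (Fin d → ℝ)) (XX : ℝ → ℝ → (Fin d → Fin d → ℝ))
    (hChen1 : ∀ s u t : ℝ, 0 ≤ s → s ≤ u → u ≤ t → t ≤ 1 → X s t = X s u + X u t)
    (hChen2 : ∀ s u t : ℝ, 0 ≤ s → s ≤ u → u ≤ t → t ≤ 1 →
      XX s t = XX s u + XX u t + (fun i j => X s u i * X u t j))
    (hXb : ∀ s t : ℝ, 0 ≤ s → s ≤ t → t ≤ 1 → ‖X s t‖ ≤ ω s t ^ (1 / p))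
    (hXXb : ∀ s t : ℝ, 0 ≤ s → s ≤ t → t ≤ 1 → ‖XX s t‖ ≤ ω s t ^ (2 / p))
    (a : ℝ → (Fin d → ℝ) →L[ℝ] (Fin n → ℝ))
    (a' : ℝ → (Fin d → Fin d → ℝ) →L[ℝ] (Fin n → ℝ))
    (ha' : ∀ s t : ℝ, 0 ≤ s → s ≤ t → t ≤ 1 → ‖a' t - a' s‖ ≤ ω s t ^ (1 / p))
    (hRa : ∀ s t : ℝ, 0 ≤ s → s ≤ t → t ≤ 1 → ∀ v : Fin d → ℝ,
      ‖a t v - a s v - a' s (fun i j => X s t i * v j)‖ ≤ ω s t ^ (2 / p) * ‖v‖) :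
    ∀ s u t : ℝ, 0 ≤ s → s ≤ u → u ≤ t → t ≤ 1 →
      ‖(a s (X s t) + a' s (XX s t)) -
          ((a u (X u t) + a' u (XX u t)) + (a s (X s u) + a' s (XX s u)))‖ ≤
        2 * ω s t ^ (3 / p) := by
  intro s u t hs hsu hut ht
  have hp : 0 < p := by linarith
  have hu : 0 ≤ u := hs.trans hsu
  have hωsu := hω_nonneg s u hs hsu (hut.trans ht)
  have hωut := hω_nonneg u t hu hut ht
  have hsu_le : ω s u ≤ ω s t := by linarith [hω_super s u t hs hsu hut ht]
  have hut_le : ω u t ≤ ω s t := by linarith [hω_super s u t hs hsu hut ht]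
  rw [hChen1 s u t hs hsu hut ht, hChen2 s u t hs hsu hut ht,
    ContinuousLinearMap.sewing_defect_eq]
  calc _ ≤ ‖a u (X u t) - a s (X u t) - a' s (fun i j => X s u i * X u t j)‖
        + ‖(a' u - a' s) (XX u t)‖ := by rw [← norm_neg (a u _ - _ - _)]; exact norm_sub_le _ _
    _ ≤ ω s u ^ (2 / p) * ω u t ^ (1 / p) + ω s u ^ (1 / p) * ω u t ^ (2 / p) := by
        gcongr
        · exact (hRa s u hs hsu (hut.trans ht) _).trans
            (by gcongr; exact hXb u t hu hut ht)
        · exact ((a' u - a' s).le_opNorm _).trans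
            (by gcongr; exacts [ha' s u hs hsu (hut.trans ht), hXXb u t hu hut ht])
    _ ≤ ω s t ^ (3 / p) + ω s t ^ (3 / p) := by
        gcongr <;> exact Real.rpow_mul_rpow_le_rpow hωsu hωut hsu_le hut_le
          (by positivity) (by positivity) (by ring)
    _ = 2 * ω s t ^ (3 / p) := (two_mul _).symm

/-- **Almost additivity of the rough integrand.** Let `2 < p < 3`, `ω` a superadditive
nonnegative function, `(X, 𝕏)` satisfying Chen's relations with the bounds
`|X_{st}| ≤ ω(s,t)^{1/p}` and `|𝕏_{st}| ≤ ω(s,t)^{2/p}`, and `(a, a')` a path controlled by `X`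
with `|a'_t - a'_s| ≤ ω(s,t)^{1/p}` and remainder of operator norm at most `ω(s,t)^{2/p}`.
Then `μ_{ts} = a_s X_{st} + a'_s 𝕏_{st}` satisfies
`|μ_{ts} - (μ_{tu} + μ_{us})| ≤ 2 ω(s,t)^{3/p}`. -/
theorem rough_integrand_almost_additive
    (p : ℝ) (hp1 : 2 < p) (hp2 : p < 3) (d n : ℕ)
    (ω : ℝ → ℝ → ℝ)
    (hω_nonneg : ∀ s t : ℝ, 0 ≤ s → s ≤ t → t ≤ 1 → 0 ≤ ω s t)
    (hω_super : ∀ s u t : ℝ, 0 ≤ s → s ≤ u → u ≤ t → t ≤ 1 → ω s u + ω u t ≤ ω s t)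
    (X : ℝ → ℝ → (Fin d → ℝ)) (XX : ℝ → ℝ → (Fin d → Fin d → ℝ))
    (hChen1 : ∀ s u t : ℝ, 0 ≤ s → s ≤ u → u ≤ t → t ≤ 1 → X s t = X s u + X u t)
    (hChen2 : ∀ s u t : ℝ, 0 ≤ s → s ≤ u → u ≤ t → t ≤ 1 →
      XX s t = XX s u + XX u t + (fun i j => X s u i * X u t j))
    (hXb : ∀ s t : ℝ, 0 ≤ s → s ≤ t → t ≤ 1 → ‖X s t‖ ≤ ω s t ^ (1 / p))
    (hXXb : ∀ s t : ℝ, 0 ≤ s → s ≤ t → t ≤ 1 → ‖XX s t‖ ≤ ω s t ^ (2 / p))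
    (a : ℝ → (Fin d → ℝ) →L[ℝ] (Fin n → ℝ))
    (a' : ℝ → (Fin d → Fin d → ℝ) →L[ℝ] (Fin n → ℝ))
    (ha' : ∀ s t : ℝ, 0 ≤ s → s ≤ t → t ≤ 1 → ‖a' t - a' s‖ ≤ ω s t ^ (1 / p))
    (hRa : ∀ s t : ℝ, 0 ≤ s → s ≤ t → t ≤ 1 → ∀ v : Fin d → ℝ,
      ‖a t v - a s v - a' s (fun i j => X s t i * v j)‖ ≤ ω s t ^ (2 / p) * ‖v‖) :
    ∀ s u t : ℝ, 0 ≤ s → s ≤ u → u ≤ t → t ≤ 1 →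
      ‖(a s (X s t) + a' s (XX s t)) -
          ((a u (X u t) + a' u (XX u t)) + (a s (X s u) + a' s (XX s u)))‖ ≤
        2 * ω s t ^ (3 / p) :=
  rough_integrand_almost_additive_general p hp1 d n ω hω_nonneg hω_super X XX hChen1 hChen2 hXb hXXb
    a a' ha' hRa
end

section
/- The rough integral is controlled by X: Let 2 < p < 3, ω a superadditive nonnegative function on {0 ≤ s ≤ t ≤ 1}, X and 𝕏 satisfying Chen's relations with |X_{st}| ≤ ω(s,t)^{1/p} and |𝕏_{st}| ≤ ω(s,t)^{2/p}, and let a : [0,1] → L(ℝ^d, ℝⁿ), a′ : [0,1] → L(ℝ^d ⊗ ℝ^d, ℝⁿ) satisfy |a′_t − a′_s| ≤ ω(s,t)^{1/p}, sup_t |a′_t| ≤ M, and |a_t − a_s − a′_s(X_{st} ⊗ ·)| ≤ ω(s,t)^{2/p}. Suppose φ : [0,1] → ℝⁿ is a path with |φ_t − φ_s − a_s X_{st} − a′_s(𝕏_{st})| ≤ K ω(s,t)^{3/p} for all s ≤ t (for instance the path produced by the sewing lemma from μ_{ts} = a_s X_{st} + a′_s(𝕏_{st})). Then for all 0 ≤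 s ≤ t ≤ 1: |φ_t − φ_s − a_s X_{st}| ≤ K ω(s,t)^{3/p} + M ω(s,t)^{2/p}; in particular (φ, a) is controlled by X with remainder of order ω^{2/p}. -/
theorem rough_integral_is_controlled_general
    (p : ℝ) (d n : ℕ)
    (ω : ℝ → ℝ → ℝ)
    (X : ℝ → ℝ → (Fin d → ℝ)) (XX : ℝ → ℝ → (Fin d → Fin d → ℝ))
    (hXXb : ∀ s t : ℝ, 0 ≤ s → s ≤ t → t ≤ 1 → ‖XX s t‖ ≤ ω s t ^ (2 / p))
    (a : ℝ → (Fin d → ℝ) →L[ℝ] (Fin n → ℝ))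
    (a' : ℝ → (Fin d → Fin d → ℝ) →L[ℝ] (Fin n → ℝ))
    (M : ℝ) (hM : ∀ t : ℝ, 0 ≤ t → t ≤ 1 → ‖a' t‖ ≤ M)
    (φ : ℝ → (Fin n → ℝ)) (K : ℝ)
    (hφ : ∀ s t : ℝ, 0 ≤ s → s ≤ t → t ≤ 1 →
      ‖φ t - φ s - a s (X s t) - a' s (XX s t)‖ ≤ K * ω s t ^ (3 / p)) :
    ∀ s t : ℝ, 0 ≤ s → s ≤ t → t ≤ 1 →
      ‖φ t - φ s - a s (X s t)‖ ≤ K * ω s t ^ (3 / p) + M * ω s t ^ (2 / p) := by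
  intro s t hs hst ht
  have hcorrection : ‖a' s (XX s t)‖ ≤ M * ω s t ^ (2 / p) :=
    (a' s).le_of_opNorm_le_of_le (hM s hs (hst.trans ht)) (hXXb s t hs hst ht)
  calc ‖φ t - φ s - a s (X s t)‖
      ≤ ‖a' s (XX s t)‖ + ‖φ t - φ s - a s (X s t) - a' s (XX s t)‖ :=
        norm_le_norm_add_norm_sub' _ _
    _ ≤ K * ω s t ^ (3 / p) + M * ω s t ^ (2 / p) := by
        linarith [hφ s t hs hst ht]

/-- **The rough integral is controlled by `X`.** Under the hypotheses of the rough integral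
lemma, with `M` a bound on `sup_t |a'_t|`, any path `φ` satisfying
`|φ_t - φ_s - a_s X_{st} - a'_s 𝕏_{st}| ≤ K ω(s,t)^{3/p}` satisfies
`|φ_t - φ_s - a_s X_{st}| ≤ K ω(s,t)^{3/p} + M ω(s,t)^{2/p}`, i.e. `(φ, a)` is controlled by
`X` with remainder of order `ω^{2/p}`. -/
theorem rough_integral_is_controlled
    (p : ℝ) (hp1 : 2 < p) (hp2 : p < 3) (d n : ℕ)
    (ω : ℝ → ℝ → ℝ)
    (hω_nonneg : ∀ s t : ℝ, 0 ≤ s → s ≤ t → t ≤ 1 → 0 ≤ ω s t)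
    (hω_super : ∀ s u t : ℝ, 0 ≤ s → s ≤ u → u ≤ t → t ≤ 1 → ω s u + ω u t ≤ ω s t)
    (X : ℝ → ℝ → (Fin d → ℝ)) (XX : ℝ → ℝ → (Fin d → Fin d → ℝ))
    (hChen1 : ∀ s u t : ℝ, 0 ≤ s → s ≤ u → u ≤ t → t ≤ 1 → X s t = X s u + X u t)
    (hChen2 : ∀ s u t : ℝ, 0 ≤ s → s ≤ u → u ≤ t → t ≤ 1 →
      XX s t = XX s u + XX u t + (fun i j => X s u i * X u t j))
    (hXb : ∀ s t : ℝ, 0 ≤ s → s ≤ t → t ≤ 1 → ‖X s t‖ ≤ ω s t ^ (1 / p))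
    (hXXb : ∀ s t : ℝ, 0 ≤ s → s ≤ t → t ≤ 1 → ‖XX s t‖ ≤ ω s t ^ (2 / p))
    (a : ℝ → (Fin d → ℝ) →L[ℝ] (Fin n → ℝ))
    (a' : ℝ → (Fin d → Fin d → ℝ) →L[ℝ] (Fin n → ℝ))
    (ha' : ∀ s t : ℝ, 0 ≤ s → s ≤ t → t ≤ 1 → ‖a' t - a' s‖ ≤ ω s t ^ (1 / p))
    (M : ℝ) (hM : ∀ t : ℝ, 0 ≤ t → t ≤ 1 → ‖a' t‖ ≤ M)
    (hRa : ∀ s t : ℝ, 0 ≤ s → s ≤ t → t ≤ 1 → ∀ v : Fin d → ℝ,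
      ‖a t v - a s v - a' s (fun i j => X s t i * v j)‖ ≤ ω s t ^ (2 / p) * ‖v‖)
    (φ : ℝ → (Fin n → ℝ)) (K : ℝ)
    (hφ : ∀ s t : ℝ, 0 ≤ s → s ≤ t → t ≤ 1 →
      ‖φ t - φ s - a s (X s t) - a' s (XX s t)‖ ≤ K * ω s t ^ (3 / p)) :
    ∀ s t : ℝ, 0 ≤ s → s ≤ t → t ≤ 1 →
      ‖φ t - φ s - a s (X s t)‖ ≤ K * ω s t ^ (3 / p) + M * ω s t ^ (2 / p) :=
  rough_integral_is_controlled_general p d n ω X XX hXXb a a' M hM φ K hφ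
end

section
/- Composition of a controlled path with a C² function: Let 2 < p < 3, ω a superadditive nonnegative function on {0 ≤ s ≤ t ≤ 1}, and X : {0 ≤ s ≤ t ≤ 1} → ℝ^d with |X_{st}| ≤ ω(s,t)^{1/p}. Let a : [0,1] → ℝⁿ and a′ : [0,1] → L(ℝ^d, ℝⁿ) satisfy |a_t − a_s| ≤ A ω(s,t)^{1/p}, |a′_t − a′_s| ≤ A′ ω(s,t)^{1/p}, sup_t |a′_t| ≤ M, and |a_t − a_s − a′_s X_{st}| ≤ B ω(s,t)^{2/p} for all s ≤ t. Let f : ℝⁿ → ℝ^m be twice continuously differentiable with first and second derivatives bounded by L. Then for all 0 ≤ s ≤ t ≤ 1: (i) |f(a_t) − f(a_s) − Df(a_s)[a′_s X_{st}]| ≤ L (B + A²) ω(s,t)^{2/p}, and (ii) |Df(a_t) ∘ a′_t − Df(a_s) ∘ a′_s| ≤ L (A′ + A M) ω(s,t)^{1/p} (operator norm in L(ℝ^d, ℝ^m)). In particular (f(a), Df(a) ∘ a′) is a path controlled by X. -/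
/-!
Both estimates come from splitting along the first-order Taylor expansion of `f` at `a_s`.
A bound `L` on `D²f` makes `Df` `L`-Lipschitz, so the Taylor remainder of `f` between `a_s`
and `a_t` is at most `L |a_t - a_s|² ≤ L A² ω^{2/p}`, while `Df(a_s)` applied to the remainder
of `a` contributes `L B ω^{2/p}`. Likewise `Df(a_t) ∘ a'_t - Df(a_s) ∘ a'_s` splits into
`(Df(a_t) - Df(a_s)) ∘ a'_t` and `Df(a_s) ∘ (a'_t - a'_s)`.
-/

open Set Metric ContinuousLinearMap

variable {E F G : Type*} [NormedAddCommGroup E] [NormedSpace ℝ E]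
  [NormedAddCommGroup F] [NormedSpace ℝ F] [NormedAddCommGroup G] [NormedSpace ℝ G]
  {f : E → F} {L : ℝ}

theorem norm_fderiv_sub_fderiv_le_of_norm_iteratedFDeriv_two_le (hf : ContDiff ℝ 2 f)
    (hf2 : ∀ x, ‖iteratedFDeriv ℝ 2 f x‖ ≤ L) (x y : E) :
    ‖fderiv ℝ f y - fderiv ℝ f x‖ ≤ L * ‖y - x‖ := by
  have hdiff : Differentiable ℝ (fderiv ℝ f) :=
    (hf.fderiv_right (m := 1) le_rfl).differentiable one_ne_zero
  refine convex_univ.norm_image_sub_le_of_norm_fderiv_le (fun z _ => hdiff z) (fun z _ => ?_)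
    (mem_univ x) (mem_univ y)
  rw [← norm_iteratedFDeriv_one, norm_iteratedFDeriv_fderiv]
  exact hf2 z

theorem norm_image_sub_sub_fderiv_le_of_lipschitz_fderiv (hf : Differentiable ℝ f)
    (hlip : ∀ x y, ‖fderiv ℝ f y - fderiv ℝ f x‖ ≤ L * ‖y - x‖) (hL : 0 ≤ L) (x y : E) :
    ‖f y - f x - fderiv ℝ f x (y - x)‖ ≤ L * ‖y - x‖ ^ 2 := by
  have hy : y ∈ closedBall x ‖y - x‖ := mem_closedBall_iff_norm.2 le_rfl
  have hx : x ∈ closedBall x ‖y - x‖ := mem_closedBall_self (norm_nonneg _)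
  calc ‖f y - f x - fderiv ℝ f x (y - x)‖ ≤ L * ‖y - x‖ * ‖y - x‖ :=
        (convex_closedBall x _).norm_image_sub_le_of_norm_fderiv_le' (fun z _ => hf z)
          (fun z hz => (hlip x z).trans <| by gcongr; exact mem_closedBall_iff_norm.1 hz) hx hy
    _ = L * ‖y - x‖ ^ 2 := by ring

theorem norm_image_sub_sub_fderiv_le_of_controlled (hf : Differentiable ℝ f)
    (hf1 : ∀ x, ‖fderiv ℝ f x‖ ≤ L)
    (hlip : ∀ x y, ‖fderiv ℝ f y - fderiv ℝ f x‖ ≤ L * ‖y - x‖)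
    {u v w : E} {A B r : ℝ} (huv : ‖v - u‖ ≤ A * r)
    (hw : ‖v - u - w‖ ≤ B * r ^ 2) :
    ‖f v - f u - fderiv ℝ f u w‖ ≤ L * (B + A ^ 2) * r ^ 2 := by
  have hL : 0 ≤ L := (norm_nonneg _).trans (hf1 u)
  have hsplit : f v - f u - fderiv ℝ f u w =
      (f v - f u - fderiv ℝ f u (v - u)) + fderiv ℝ f u (v - u - w) := by
    simp only [map_sub]; abel
  have htaylor := norm_image_sub_sub_fderiv_le_of_lipschitz_fderiv hf hlip hL u v
  calc ‖f v - f u - fderiv ℝ f u w‖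
      ≤ ‖f v - f u - fderiv ℝ f u (v - u)‖ + ‖fderiv ℝ f u‖ * ‖v - u - w‖ := by
        rw [hsplit]; exact (norm_add_le _ _).trans (add_le_add_right (le_opNorm _ _) _)
    _ ≤ L * (A * r) ^ 2 + L * (B * r ^ 2) := by
        gcongr
        · exact htaylor.trans (by gcongr)
        · exact hf1 u
    _ = L * (B + A ^ 2) * r ^ 2 := by ring

theorem norm_fderiv_comp_sub_fderiv_comp_le (hf1 : ∀ x, ‖fderiv ℝ f x‖ ≤ L)
    (hlip : ∀ x y, ‖fderiv ℝ f y - fderiv ℝ f x‖ ≤ L * ‖y - x‖)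
    {u v : E} {b b' : G →L[ℝ] E} {A A' M r : ℝ} (huv : ‖v - u‖ ≤ A * r) (hb : ‖b‖ ≤ M)
    (hbb' : ‖b - b'‖ ≤ A' * r) :
    ‖(fderiv ℝ f v).comp b - (fderiv ℝ f u).comp b'‖ ≤ L * (A' + A * M) * r := by
  have hL : 0 ≤ L := (norm_nonneg _).trans (hf1 u)
  have hsplit : (fderiv ℝ f v).comp b - (fderiv ℝ f u).comp b' =
      (fderiv ℝ f v - fderiv ℝ f u).comp b + (fderiv ℝ f u).comp (b - b') := by
    ext; simp
  have hdiff : ‖fderiv ℝ f v - fderiv ℝ f u‖ ≤ L * (A * r) :=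
    (hlip u v).trans (by gcongr)
  calc ‖(fderiv ℝ f v).comp b - (fderiv ℝ f u).comp b'‖
      ≤ ‖fderiv ℝ f v - fderiv ℝ f u‖ * ‖b‖ + ‖fderiv ℝ f u‖ * ‖b - b'‖ := by
        rw [hsplit]
        exact (norm_add_le _ _).trans (add_le_add (opNorm_comp_le _ _) (opNorm_comp_le _ _))
    _ ≤ L * (A * r) * M + L * (A' * r) :=
        add_le_add (mul_le_mul hdiff hb (norm_nonneg _) ((norm_nonneg _).trans hdiff))
          (mul_le_mul (hf1 u) hbb' (norm_nonneg _) hL)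
    _ = L * (A' + A * M) * r := by ring

theorem controlled_path_composition_general
    (p : ℝ) (d n m : ℕ)
    (ω : ℝ → ℝ → ℝ)
    (hω_nonneg : ∀ s t : ℝ, 0 ≤ s → s ≤ t → t ≤ 1 → 0 ≤ ω s t)
    (X : ℝ → ℝ → (Fin d → ℝ))
    (A A' M B L : ℝ)
    (a : ℝ → (Fin n → ℝ)) (a' : ℝ → (Fin d → ℝ) →L[ℝ] (Fin n → ℝ))
    (ha : ∀ s t : ℝ, 0 ≤ s → s ≤ t → t ≤ 1 → ‖a t - a s‖ ≤ A * ω s t ^ (1 / p))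
    (ha' : ∀ s t : ℝ, 0 ≤ s → s ≤ t → t ≤ 1 → ‖a' t - a' s‖ ≤ A' * ω s t ^ (1 / p))
    (hM : ∀ t : ℝ, 0 ≤ t → t ≤ 1 → ‖a' t‖ ≤ M)
    (hB : ∀ s t : ℝ, 0 ≤ s → s ≤ t → t ≤ 1 →
      ‖a t - a s - a' s (X s t)‖ ≤ B * ω s t ^ (2 / p))
    (f : (Fin n → ℝ) → (Fin m → ℝ)) (hf : ContDiff ℝ 2 f)
    (hf1 : ∀ x, ‖fderiv ℝ f x‖ ≤ L)
    (hf2 : ∀ x, ‖iteratedFDeriv ℝ 2 f x‖ ≤ L) :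
    ∀ s t : ℝ, 0 ≤ s → s ≤ t → t ≤ 1 →
      ‖f (a t) - f (a s) - fderiv ℝ f (a s) (a' s (X s t))‖ ≤
          L * (B + A ^ 2) * ω s t ^ (2 / p) ∧
      ‖(fderiv ℝ f (a t)).comp (a' t) - (fderiv ℝ f (a s)).comp (a' s)‖ ≤
          L * (A' + A * M) * ω s t ^ (1 / p) := by
  have hlip := norm_fderiv_sub_fderiv_le_of_norm_iteratedFDeriv_two_le hf hf2
  intro s t hs hst ht
  have hω := hω_nonneg s t hs hst ht
  have hsq : ω s t ^ (2 / p) = (ω s t ^ (1 / p)) ^ 2 := by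
    rw [← Real.rpow_natCast, ← Real.rpow_mul hω]; ring_nf
  have hB' := hB s t hs hst ht
  rw [hsq] at hB' ⊢
  exact ⟨norm_image_sub_sub_fderiv_le_of_controlled (hf.differentiable (by norm_num)) hf1 hlip
      (ha s t hs hst ht) hB',
    norm_fderiv_comp_sub_fderiv_comp_le hf1 hlip (ha s t hs hst ht) (hM t (hs.trans hst) ht)
      (ha' s t hs hst ht)⟩

/-- **Composition of a controlled path with a `C²` function.** Let `(a, a')` be a path
controlled by `X` (with constants `A, A', M, B` as below) and `f` of class `C²` with first and
second derivatives bounded by `L`. Then `(f(a), Df(a) ∘ a')` is a path controlled by `X`: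
(i) `|f(a_t) - f(a_s) - Df(a_s)[a'_s X_{st}]| ≤ L (B + A²) ω(s,t)^{2/p}` and
(ii) `|Df(a_t) ∘ a'_t - Df(a_s) ∘ a'_s| ≤ L (A' + A M) ω(s,t)^{1/p}`. -/
theorem controlled_path_composition
    (p : ℝ) (hp1 : 2 < p) (hp2 : p < 3) (d n m : ℕ)
    (ω : ℝ → ℝ → ℝ)
    (hω_nonneg : ∀ s t : ℝ, 0 ≤ s → s ≤ t → t ≤ 1 → 0 ≤ ω s t)
    (hω_super : ∀ s u t : ℝ, 0 ≤ s → s ≤ u → u ≤ t → t ≤ 1 → ω s u + ω u t ≤ ω s t)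
    (X : ℝ → ℝ → (Fin d → ℝ))
    (hXb : ∀ s t : ℝ, 0 ≤ s → s ≤ t → t ≤ 1 → ‖X s t‖ ≤ ω s t ^ (1 / p))
    (A A' M B L : ℝ)
    (a : ℝ → (Fin n → ℝ)) (a' : ℝ → (Fin d → ℝ) →L[ℝ] (Fin n → ℝ))
    (ha : ∀ s t : ℝ, 0 ≤ s → s ≤ t → t ≤ 1 → ‖a t - a s‖ ≤ A * ω s t ^ (1 / p))
    (ha' : ∀ s t : ℝ, 0 ≤ s → s ≤ t → t ≤ 1 → ‖a' t - a' s‖ ≤ A' * ω s t ^ (1 / p))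
    (hM : ∀ t : ℝ, 0 ≤ t → t ≤ 1 → ‖a' t‖ ≤ M)
    (hB : ∀ s t : ℝ, 0 ≤ s → s ≤ t → t ≤ 1 →
      ‖a t - a s - a' s (X s t)‖ ≤ B * ω s t ^ (2 / p))
    (f : (Fin n → ℝ) → (Fin m → ℝ)) (hf : ContDiff ℝ 2 f)
    (hf1 : ∀ x, ‖fderiv ℝ f x‖ ≤ L)
    (hf2 : ∀ x, ‖iteratedFDeriv ℝ 2 f x‖ ≤ L) :
    ∀ s t : ℝ, 0 ≤ s → s ≤ t → t ≤ 1 →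
      ‖f (a t) - f (a s) - fderiv ℝ f (a s) (a' s (X s t))‖ ≤
          L * (B + A ^ 2) * ω s t ^ (2 / p) ∧
      ‖(fderiv ℝ f (a t)).comp (a' t) - (fderiv ℝ f (a s)).comp (a' s)‖ ≤
          L * (A' + A * M) * ω s t ^ (1 / p) :=
  controlled_path_composition_general p d n m ω hω_nonneg X A A' M B L a a' ha ha' hM hB f hf hf1
    hf2
end
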